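/- arXiv:1404.6624 — 10 statements merged into one kernel-verified Lean document; each statement's English description precedes it below -/
import Mathlib

section
/- Let θ ∈ ℂ be either a positive real number or θ = iβ with β ∈ (0,π), and let p ∈ ℝ. Suppose that for every integer k ≥ 0 there exists a function a_k : ℂ∖{0} → ℂ that is even-symmetric, i.e. z·a_k(z) = a_k(z⁻¹) for all z ≠ 0, and satisfies the reproduction conditions a_k(e^{−θ/2^{k+1}}) = 2·e^{−pθ/2^{k+1}} and a_k(e^{θ/2^{k+1}}) = 2·e^{pθ/2^{k+1}}. Then p = −1/2. -/
/-!
Even symmetry at `z = e^{-x}`, `x = θ / 2^{k+1}`, turns the two reproduction conditions into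
`e^{(2p+1)x} = 1`. So `(2p+1)θ / 2^{k+1}` lies in `2πiℤ` for every `k`; a nonzero element of
`2πiℤ` has norm at least `2π`, which `(2p+1)θ / 2^{k+1}` eventually undercuts. Hence
`(2p+1)θ = 0`, and `θ ≠ 0`.
-/

open Complex

theorem exp_mul_eq_one_of_evenSymmetric {a : ℂ → ℂ} (hs : ∀ z : ℂ, z ≠ 0 → z * a z = a z⁻¹)
    {c x μ : ℂ} (hμ : μ ≠ 0) (hneg : a (exp (-x)) = μ * exp (-c * x))
    (hpos : a (exp x) = μ * exp (c * x)) : exp ((2 * c + 1) * x) = 1 := by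
  have hsym := hs (exp (-x)) (exp_ne_zero _)
  rw [hneg, ← exp_neg, neg_neg, hpos, mul_left_comm, ← exp_add] at hsym
  have hexp : exp (-x + -c * x) = exp (c * x) := mul_left_cancel₀ hμ hsym
  calc exp ((2 * c + 1) * x) = exp (c * x) / exp (-x + -c * x) := by
        rw [← exp_sub]; ring_nf
    _ = 1 := by rw [hexp, div_self (exp_ne_zero _)]

theorem two_pi_le_norm_of_exp_eq_one {w : ℂ} (hexp : exp w = 1) (hw : w ≠ 0) :
    2 * Real.pi ≤ ‖w‖ := by
  obtain ⟨n, rfl⟩ := exp_eq_one_iff.mp hexp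
  have hn : n ≠ 0 := by rintro rfl; simp at hw
  have hn1 : (1 : ℝ) ≤ |(n : ℝ)| := by exact_mod_cast Int.one_le_abs hn
  calc 2 * Real.pi = 1 * ‖2 * (Real.pi : ℂ) * I‖ := by simp [abs_of_pos Real.pi_pos]
    _ ≤ |(n : ℝ)| * ‖2 * (Real.pi : ℂ) * I‖ := by gcongr
    _ = ‖(n : ℂ) * (2 * Real.pi * I)‖ := by rw [norm_mul (n : ℂ), Complex.norm_intCast]

theorem eq_zero_of_forall_exp_div_two_pow_eq_one {w : ℂ} (h : ∀ k : ℕ, exp (w / 2 ^ k) = 1) :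
    w = 0 := by
  by_contra hw
  obtain ⟨k, hk⟩ := pow_unbounded_of_one_lt (‖w‖ / (2 * Real.pi)) one_lt_two
  have hle := two_pi_le_norm_of_exp_eq_one (h k) (div_ne_zero hw (pow_ne_zero _ two_ne_zero))
  rw [norm_div, norm_pow, RCLike.norm_ofNat, le_div_iff₀ (by positivity)] at hle
  rw [div_lt_iff₀ (by positivity)] at hk
  linarith

/-- If for every level `k` there is an even-symmetric `k`-level symbol satisfying the
conditions for reproduction of the pair `{e^{θx}, e^{-θx}}` with shift parameter `p`,
then `p = -1/2`. -/
theorem evenSymmetric_reproduction_shift_eq_neg_half (θ : ℂ) (p : ℝ)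
    (hθ : (∃ t : ℝ, 0 < t ∧ θ = (t : ℂ)) ∨
          (∃ β : ℝ, 0 < β ∧ β < Real.pi ∧ θ = (β : ℂ) * I))
    (h : ∀ k : ℕ, ∃ a : ℂ → ℂ,
      (∀ z : ℂ, z ≠ 0 → z * a z = a z⁻¹) ∧
      a (exp (-θ / 2 ^ (k + 1))) = 2 * exp (-(p : ℂ) * θ / 2 ^ (k + 1)) ∧
      a (exp (θ / 2 ^ (k + 1))) = 2 * exp ((p : ℂ) * θ / 2 ^ (k + 1))) :
    p = -(1 / 2) := by
  have hθ0 : θ ≠ 0 := by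
    rcases hθ with ⟨t, ht, rfl⟩ | ⟨β, hβ, -, rfl⟩
    · exact_mod_cast ht.ne'
    · exact mul_ne_zero (ofReal_ne_zero.mpr hβ.ne') I_ne_zero
  have hexp : ∀ k : ℕ, exp ((2 * p + 1) * θ / 2 / 2 ^ k) = 1 := fun k => by
    obtain ⟨a, hs, hneg, hpos⟩ := h k
    rw [neg_div, mul_div_assoc] at hneg
    rw [mul_div_assoc] at hpos
    convert exp_mul_eq_one_of_evenSymmetric hs two_ne_zero hneg hpos using 2
    ring
  have hzero := eq_zero_of_forall_exp_div_two_pow_eq_one hexp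
  have hp : (2 * p + 1 : ℂ) = 0 := by simpa [hθ0] using hzero
  have hp' : (p : ℂ) = ((-(1 / 2) : ℝ) : ℂ) := by push_cast; linear_combination hp / 2
  exact_mod_cast hp'
end

section
/- Let k ≥ 0 and d ≥ 1 be integers, and let θ ∈ ℂ be either a positive real number or θ = iβ with β ∈ [0,π). Let a be a Laurent polynomial over ℝ that is even-symmetric, i.e. z·a(z) = a(z⁻¹) for all z ≠ 0, and define b(z) := z·a(z²) − 2. Then the following are equivalent: (i) for every r with 0 ≤ r ≤ d−1, the r-th complex derivative of a at w := e^{−θ/2^{k+1}} equals 2·e^{(1/2+r)θ/2^{k+1}}·∏_{i=0}^{r−1}(−1/2 − i); (ii) for every r with 0 ≤ r ≤ d−1, the r-th complex derivative of b at e^{−θ/2^{k+2}} equals 0. -/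
/-!
Write `a(z) = ∑ c_j z^j` and `v = e^{-θ/2^{k+2}}`, so that `w = v²` and
`e^{(1/2+r)θ/2^{k+1}} = v^{-(2r+1)}`. After multiplying by a suitable power of `v`, both
conditions of order `r` become the vanishing of the functional
`L p = ∑ c_j v^{2j+1} p(j) - 2 p(-1/2)` on a polynomial of degree exactly `r`: on the falling
factorial `descPochhammer r` for (i), and on `descPochhammer r ∘ (2X + 1)` for (ii). Either family
of degrees `0, …, d-1` spans the polynomials of degree `< d`, so the two sets of conditions agree.
-/

open Complex Finset Polynomial Topology

theorem Polynomial.Sequence.forall_lt_map_eq_zero_iff {K M : Type*} [Field K] [AddCommGroup M]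
    [Module K M] (S T : Sequence K) (L : K[X] →ₗ[K] M) (d : ℕ) :
    (∀ r < d, L (S r) = 0) ↔ ∀ r < d, L (T r) = 0 := by
  suffices key : ∀ S T : Sequence K, (∀ r < d, L (S r) = 0) → ∀ r < d, L (T r) = 0 from
    ⟨key S T, key T S⟩
  intro S T hS r hr
  have hspan : Submodule.span K (S '' Set.Iio d) ≤ LinearMap.ker L := by
    rw [Submodule.span_le]
    rintro _ ⟨i, hi, rfl⟩
    exact hS i hi
  rw [S.span_degreeLT fun i _ => (leadingCoeff_ne_zero.mpr (S.ne_zero i)).isUnit] at hspan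
  exact hspan (mem_degreeLT.mpr (by simpa using hr))

section

variable {𝕜 : Type*} [NontriviallyNormedField 𝕜]

theorem iteratedDeriv_eq_sum_zpow {ι : Type*} {f : 𝕜 → 𝕜} (s : Finset ι) (c : ι → 𝕜) (e : ι → ℤ)
    (hf : ∀ z ≠ 0, f z = ∑ i ∈ s, c i * z ^ e i) (r : ℕ) {z : 𝕜} (hz : z ≠ 0) :
    iteratedDeriv r f z = ∑ i ∈ s, c i * (descPochhammer 𝕜 r).eval (e i : 𝕜) * z ^ (e i - r) := by
  induction r generalizing z with
  | zero => simp [hf z hz]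
  | succ r ih =>
    have hloc : iteratedDeriv r f =ᶠ[𝓝 z]
        fun y => ∑ i ∈ s, c i * (descPochhammer 𝕜 r).eval (e i : 𝕜) * y ^ (e i - r) :=
      (eventually_ne_nhds hz).mono fun y hy => ih hy
    rw [iteratedDeriv_succ, hloc.deriv_eq, (HasDerivAt.fun_sum fun i _ =>
      (hasDerivAt_zpow (e i - r) z (Or.inl hz)).const_mul
        (c i * (descPochhammer 𝕜 r).eval (e i : 𝕜))).deriv]
    refine sum_congr rfl fun i _ => ?_
    rw [descPochhammer_succ_eval, sub_sub]
    push_cast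
    ring

variable {a : 𝕜 → 𝕜} (s : Finset ℤ) (c : ℤ → 𝕜)

theorem iteratedDeriv_apply_sq_mul_pow (ha : ∀ z ≠ 0, a z = ∑ j ∈ s, c j * z ^ j) (r : ℕ)
    {v : 𝕜} (hv : v ≠ 0) :
    iteratedDeriv r a (v ^ 2) * v ^ (2 * r + 1) =
      ∑ j ∈ s, c j * v ^ (2 * j + 1) * (descPochhammer 𝕜 r).eval (j : 𝕜) := by
  rw [iteratedDeriv_eq_sum_zpow s c id ha r (pow_ne_zero 2 hv), sum_mul]
  refine sum_congr rfl fun j _ => ?_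
  have hpow : (v ^ 2) ^ (j - r) * v ^ (2 * r + 1) = v ^ (2 * j + 1) := by
    rw [← zpow_natCast, ← zpow_natCast, ← zpow_mul, ← zpow_add₀ hv]
    congr 1
    push_cast
    ring
  simp only [id]
  rw [← hpow]
  ring

theorem iteratedDeriv_mul_apply_sq_sub_two_mul_pow (ha : ∀ z ≠ 0, a z = ∑ j ∈ s, c j * z ^ j)
    (r : ℕ) {v : 𝕜} (hv : v ≠ 0) :
    iteratedDeriv r (fun z => z * a (z ^ 2) - 2) v * v ^ r =
      ∑ j ∈ s, c j * v ^ (2 * j + 1) * (descPochhammer 𝕜 r).eval (2 * j + 1 : 𝕜) -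
        2 * (descPochhammer 𝕜 r).eval 0 := by
  -- the constant `-2` is the `none` term, with exponent `0`
  have hb : ∀ z ≠ 0, z * a (z ^ 2) - 2 =
      ∑ i ∈ insertNone s, i.elim (-2) c * z ^ i.elim 0 (fun j => 2 * j + 1) := by
    intro z hz
    simp only [sum_insertNone, Option.elim_none, Option.elim_some, zpow_zero, mul_one]
    rw [ha _ (pow_ne_zero 2 hz), mul_sum, neg_add_eq_sub]
    refine congrArg (· - 2) (sum_congr rfl fun j _ => ?_)
    rw [← zpow_natCast, ← zpow_mul, zpow_add_one₀ hz]
    push_cast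
    ring
  rw [iteratedDeriv_eq_sum_zpow _ _ _ hb r hv]
  simp only [sum_insertNone, Option.elim_none, Option.elim_some, add_mul, sum_mul]
  rw [add_comm, sub_eq_add_neg (∑ j ∈ s, _)]
  congr 1
  · refine sum_congr rfl fun j _ => ?_
    rw [mul_assoc, ← zpow_natCast v r, ← zpow_add₀ hv, sub_add_cancel]
    push_cast
    ring
  · rw [mul_assoc, ← zpow_natCast v r, ← zpow_add₀ hv, sub_add_cancel, zpow_zero]
    push_cast
    ring

theorem reproduction_iff_iteratedDeriv_eq_zero [CharZero 𝕜]
    (ha : ∀ z ≠ 0, a z = ∑ j ∈ s, c j * z ^ j) {v : 𝕜} (hv : v ≠ 0) (d : ℕ) :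
    (∀ r < d, iteratedDeriv r a (v ^ 2) =
        2 * (v ^ (2 * r + 1))⁻¹ * (descPochhammer 𝕜 r).eval (-(1 / 2))) ↔
      ∀ r < d, iteratedDeriv r (fun z => z * a (z ^ 2) - 2) v = 0 := by
  let L : 𝕜[X] →ₗ[𝕜] 𝕜 :=
    ∑ j ∈ s, (c j * v ^ (2 * j + 1)) • leval (j : 𝕜) - (2 : 𝕜) • leval (-(1 / 2))
  have hL (p : 𝕜[X]) :
      L p = ∑ j ∈ s, c j * v ^ (2 * j + 1) * p.eval (j : 𝕜) - 2 * p.eval (-(1 / 2)) := by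
    simp [L]
  have hA (r : ℕ) : iteratedDeriv r a (v ^ 2) =
      2 * (v ^ (2 * r + 1))⁻¹ * (descPochhammer 𝕜 r).eval (-(1 / 2)) ↔
        L (descPochhammer 𝕜 r) = 0 := by
    have hV : v ^ (2 * r + 1) ≠ 0 := pow_ne_zero _ hv
    rw [hL, ← iteratedDeriv_apply_sq_mul_pow s c ha r hv, sub_eq_zero, ← mul_left_inj' hV]
    field_simp
  have hB (r : ℕ) : iteratedDeriv r (fun z => z * a (z ^ 2) - 2) v = 0 ↔
      L ((descPochhammer 𝕜 r).comp (2 * X + 1)) = 0 := by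
    have h2 : 2 * (-(1 / 2) : 𝕜) + 1 = 0 := by norm_num
    simp only [hL, eval_comp, eval_add, eval_mul, eval_X, eval_one, eval_ofNat, h2]
    rw [← iteratedDeriv_mul_apply_sq_sub_two_mul_pow s c ha r hv, mul_eq_zero,
      or_iff_left (pow_ne_zero r hv)]
  have hP (n : ℕ) : (descPochhammer 𝕜 n).degree = n := by
    rw [degree_eq_natDegree (monic_descPochhammer 𝕜 n).ne_zero, descPochhammer_natDegree]
  have hQ (n : ℕ) : ((descPochhammer 𝕜 n).comp (2 * X + 1)).degree = n := by
    have hlin : (2 * X + 1 : 𝕜[X]).degree = 1 := by compute_degree!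
    rw [degree_comp (by rw [hlin]; exact zero_lt_one), hP, hlin, mul_one]
  simp only [hA, hB]
  exact Sequence.forall_lt_map_eq_zero_iff ⟨_, hP⟩ ⟨_, hQ⟩ L d

end

theorem evenSymmetric_reproduction_iff_assoc_vanish_general (k d : ℕ) (θ : ℂ)
    (a : ℂ → ℂ)
    (ha : ∃ (c : ℤ → ℝ) (s : Finset ℤ), ∀ z : ℂ, z ≠ 0 → a z = ∑ j ∈ s, (c j : ℂ) * z ^ j) :
    (∀ r < d, iteratedDeriv r a (exp (-θ / 2 ^ (k + 1))) =
        2 * exp ((1 / 2 + (r : ℂ)) * θ / 2 ^ (k + 1)) *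
          ∏ i ∈ range r, (-(1 / 2) - (i : ℂ))) ↔
    (∀ r < d, iteratedDeriv r (fun z : ℂ => z * a (z ^ 2) - 2) (exp (-θ / 2 ^ (k + 2))) = 0) := by
  obtain ⟨c, s, hc⟩ := ha
  set v := exp (-θ / 2 ^ (k + 2))
  have hsq : exp (-θ / 2 ^ (k + 1)) = v ^ 2 := by
    rw [← exp_nat_mul]
    congr 1
    ring
  have hexp (r : ℕ) : exp ((1 / 2 + (r : ℂ)) * θ / 2 ^ (k + 1)) = (v ^ (2 * r + 1))⁻¹ := by
    rw [← exp_nat_mul, ← exp_neg]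
    congr 1
    push_cast
    ring
  simp only [hsq, hexp, ← descPochhammer_eval_eq_prod_range]
  exact reproduction_iff_iteratedDeriv_eq_zero s (fun j => (c j : ℂ)) hc (exp_ne_zero _) d

/-- For an even-symmetric real Laurent polynomial `a`, the reproduction conditions
(with shift `p = -1/2`) at `w = e^{-θ/2^{k+1}}` up to order `d-1` hold if and only if the
associated odd-symmetric Laurent polynomial `b(z) = z·a(z²) - 2` and all its derivatives
up to order `d-1` vanish at `e^{-θ/2^{k+2}}`. -/
theorem evenSymmetric_reproduction_iff_assoc_vanish (k d : ℕ) (hd : 1 ≤ d) (θ : ℂ)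
    (hθ : (∃ t : ℝ, 0 < t ∧ θ = (t : ℂ)) ∨
          (∃ β : ℝ, 0 ≤ β ∧ β < Real.pi ∧ θ = (β : ℂ) * I))
    (a : ℂ → ℂ)
    (ha : ∃ (c : ℤ → ℝ) (s : Finset ℤ), ∀ z : ℂ, z ≠ 0 → a z = ∑ j ∈ s, (c j : ℂ) * z ^ j)
    (hsym : ∀ z : ℂ, z ≠ 0 → z * a z = a z⁻¹) :
    (∀ r < d, iteratedDeriv r a (exp (-θ / 2 ^ (k + 1))) =
        2 * exp ((1 / 2 + (r : ℂ)) * θ / 2 ^ (k + 1)) *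
          ∏ i ∈ range r, (-(1 / 2) - (i : ℂ))) ↔
    (∀ r < d, iteratedDeriv r (fun z : ℂ => z * a (z ^ 2) - 2) (exp (-θ / 2 ^ (k + 2))) = 0) :=
  evenSymmetric_reproduction_iff_assoc_vanish_general k d θ a ha
end

section
/- Let k ≥ 0 and d ≥ 1 be integers, let θ ∈ ℂ be either a positive real number or θ = iβ with β ∈ [0,π), and set w := e^{−θ/2^{k+1}}. Let a be a Laurent polynomial over ℝ that is even-symmetric, i.e. z·a(z) = a(z⁻¹) for all z ≠ 0. Then [for every r with 0 ≤ r ≤ d−1, the r-th complex derivative of a at w equals 2·e^{(1/2+r)θ/2^{k+1}}·∏_{i=0}^{r−1}(−1/2 − i)] if and only if [for every r with 0 ≤ r ≤ d−1, the r-th complex derivative of a at w⁻¹ equals 2·e^{−(1/2+r)θ/2^{k+1}}·∏_{i=0}^{r−1}(−1/2 − i)]. (These are the exponential-polynomial reproduction conditions with shift parameter p = −1/2 at w and at w⁻¹, respectively.) -/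
/-!
Write `a z = ∑ c_j z ^ j` and `τ = θ / 2 ^ (k + 1)`, so `w = e^{-τ}`. Since
`z ^ r a⁽ʳ⁾(z) = ∑ c_j (j)_r z ^ j` with `(x)_r` the falling factorial, the `r`-th condition at `w`
says that `φ := reproductionFunctional s c τ`, given by
`φ P = ∑ c_j P(j) w ^ j - 2 e^{τ/2} P(-1/2)`, vanishes on `(x)_r`.
Even symmetry gives `a z = ∑ c_j z ^ (-1 - j)`, which turns the `r`-th condition at `w⁻¹` into
`φ ((-1 - x)_r) = 0`. The falling factorials of degree `< d` span the polynomials of degree `< d`,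
and the reflection `x ↦ -1 - x` preserves this space, so both families of conditions say that
`φ` vanishes on all polynomials of degree `< d`.
-/

open Complex Finset Polynomial Filter Topology

section Falling

variable {R : Type*} [CommRing R] [IsDomain R]

theorem span_descPochhammer_eq_degreeLT (d : ℕ) :
    Submodule.span R (descPochhammer R '' Set.Iio d) = degreeLT R d :=
  Sequence.span_degreeLT (R := R) ⟨descPochhammer R, fun n => by
    rw [degree_eq_natDegree (monic_descPochhammer R n).ne_zero, descPochhammer_natDegree]⟩
    fun n _ => by simp [(monic_descPochhammer R n).leadingCoeff]

variable {M : Type*} [AddCommGroup M] [Module R M] {d : ℕ}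

theorem map_eq_zero_of_degree_lt_of_forall_descPochhammer (φ : R[X] →ₗ[R] M)
    (h : ∀ r < d, φ (descPochhammer R r) = 0) {P : R[X]} (hP : P.degree < d) : φ P = 0 := by
  have : degreeLT R d ≤ LinearMap.ker φ := by
    rw [← span_descPochhammer_eq_degreeLT, Submodule.span_le]
    rintro _ ⟨r, hr, rfl⟩
    exact h r hr
  exact this (mem_degreeLT.2 hP)

theorem forall_descPochhammer_comp_of_forall_descPochhammer (φ : R[X] →ₗ[R] M) {q : R[X]}
    (hq : q.natDegree ≤ 1) (h : ∀ r < d, φ (descPochhammer R r) = 0) :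
    ∀ r < d, φ ((descPochhammer R r).comp q) = 0 := by
  intro r hr
  refine map_eq_zero_of_degree_lt_of_forall_descPochhammer φ h (degree_le_natDegree.trans_lt ?_)
  have hdeg : ((descPochhammer R r).comp q).natDegree < d :=
    calc ((descPochhammer R r).comp q).natDegree ≤ r * q.natDegree := by
          simpa [descPochhammer_natDegree] using natDegree_comp_le (p := descPochhammer R r)
      _ ≤ r := by simpa using Nat.mul_le_mul_left r hq
      _ < d := hr
  exact_mod_cast hdeg

theorem forall_descPochhammer_iff_comp_of_involutive (φ : R[X] →ₗ[R] M) {q : R[X]}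
    (hq : q.natDegree ≤ 1) (hqq : q.comp q = X) :
    (∀ r < d, φ (descPochhammer R r) = 0) ↔ ∀ r < d, φ ((descPochhammer R r).comp q) = 0 := by
  refine ⟨forall_descPochhammer_comp_of_forall_descPochhammer φ hq, fun h r hr => ?_⟩
  simpa [← comp_eq_aeval, comp_assoc, hqq] using
    forall_descPochhammer_comp_of_forall_descPochhammer (φ ∘ₗ (aeval q).toLinearMap) hq h r hr

end Falling

section Laurent

variable {ι : Type*} (s : Finset ι) (c : ι → ℂ) (e : ι → ℤ)

noncomputable def laurentMoment (w : ℂ) : ℂ[X] →ₗ[ℂ] ℂ :=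
  ∑ i ∈ s, (c i * w ^ e i) • leval (e i : ℂ)

theorem laurentMoment_apply (w : ℂ) (P : ℂ[X]) :
    laurentMoment s c e w P = ∑ i ∈ s, c i * P.eval (e i : ℂ) * w ^ e i := by
  simp [laurentMoment, mul_right_comm]

theorem pow_mul_iteratedDeriv_eq_laurentMoment {a : ℂ → ℂ}
    (ha : ∀ z ≠ 0, a z = ∑ i ∈ s, c i * z ^ e i) {w : ℂ} (hw : w ≠ 0) (r : ℕ) :
    w ^ r * iteratedDeriv r a w = laurentMoment s c e w (descPochhammer ℂ r) := by
  have hev : a =ᶠ[𝓝 w] fun z => ∑ i ∈ s, c i * z ^ e i := by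
    filter_upwards [eventually_ne_nhds hw] with z hz using ha z hz
  rw [hev.iteratedDeriv_eq, iteratedDeriv_fun_sum (f := fun i z => c i * z ^ e i) fun i _ =>
      (analyticAt_const.mul (analyticAt_id.zpow hw)).contDiffAt,
    laurentMoment_apply, mul_sum]
  refine sum_congr rfl fun i _ => ?_
  rw [iteratedDeriv_const_mul_field, iteratedDeriv_eq_iterate, iter_deriv_zpow,
    descPochhammer_eval_eq_prod_range, zpow_sub₀ hw, zpow_natCast]
  field_simp

theorem laurentMoment_neg_sub_inv (m : ℤ) {w : ℂ} (hw : w ≠ 0) (P : ℂ[X]) :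
    laurentMoment s c (fun i => -m - e i) w⁻¹ P
      = w ^ m * laurentMoment s c e w (P.comp (C (-m : ℂ) - X)) := by
  rw [laurentMoment_apply, laurentMoment_apply, mul_sum]
  refine sum_congr rfl fun i _ => ?_
  rw [eval_comp, eval_sub, eval_C, eval_X, inv_zpow', neg_sub, zpow_sub₀ hw, zpow_neg,
    div_inv_eq_mul]
  push_cast
  ring

theorem eq_sum_zpow_neg_sub_of_symm {a : ℂ → ℂ} (m : ℤ)
    (ha : ∀ z ≠ 0, a z = ∑ i ∈ s, c i * z ^ e i) (hsym : ∀ z ≠ 0, z ^ m * a z = a z⁻¹)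
    (z : ℂ) (hz : z ≠ 0) :
    a z = ∑ i ∈ s, c i * z ^ (-m - e i) := by
  have hinv := hsym z⁻¹ (inv_ne_zero hz)
  rw [inv_inv, ha z⁻¹ (inv_ne_zero hz)] at hinv
  rw [← hinv, mul_sum]
  refine sum_congr rfl fun i _ => ?_
  rw [inv_zpow', inv_zpow', sub_eq_add_neg, zpow_add₀ hz]
  ring

end Laurent

noncomputable def reproductionFunctional (s : Finset ℤ) (c : ℤ → ℂ) (τ : ℂ) : ℂ[X] →ₗ[ℂ] ℂ :=
  laurentMoment s c id (exp (-τ)) - (2 * exp (τ / 2)) • leval (-(1 / 2) : ℂ)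

section Reproduction

variable {s : Finset ℤ} {c : ℤ → ℂ} {a : ℂ → ℂ} (τ : ℂ) (r : ℕ)

theorem iteratedDeriv_exp_neg_eq_iff (ha : ∀ z ≠ 0, a z = ∑ j ∈ s, c j * z ^ j) :
    iteratedDeriv r a (exp (-τ)) = 2 * exp ((1 / 2 + r) * τ) * (descPochhammer ℂ r).eval (-(1 / 2))
      ↔ reproductionFunctional s c τ (descPochhammer ℂ r) = 0 := by
  have hw : exp (-τ) ≠ 0 := exp_ne_zero _
  have hexp : exp (-τ) ^ r * exp ((1 / 2 + r) * τ) = exp (τ / 2) := by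
    rw [← exp_nat_mul, ← exp_add]
    ring_nf
  rw [← mul_right_inj' (pow_ne_zero r hw), pow_mul_iteratedDeriv_eq_laurentMoment s c id ha hw,
    ← mul_assoc, mul_left_comm _ 2, hexp]
  simp [reproductionFunctional, sub_eq_zero]

theorem iteratedDeriv_inv_exp_neg_eq_iff (ha : ∀ z ≠ 0, a z = ∑ j ∈ s, c j * z ^ (-1 - j)) :
    iteratedDeriv r a (exp (-τ))⁻¹ =
        2 * exp (-(1 / 2 + r) * τ) * (descPochhammer ℂ r).eval (-(1 / 2))
      ↔ reproductionFunctional s c τ ((descPochhammer ℂ r).comp (C (-1) - X)) = 0 := by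
  have hw : exp (-τ) ≠ 0 := exp_ne_zero _
  have hexp : (exp (-τ))⁻¹ ^ r * exp (-(1 / 2 + r) * τ) = exp (-τ) * exp (τ / 2) := by
    rw [← exp_neg, ← exp_nat_mul, ← exp_add, ← exp_add]
    ring_nf
  rw [← mul_right_inj' (pow_ne_zero r (inv_ne_zero hw)),
    pow_mul_iteratedDeriv_eq_laurentMoment s c (fun j => -1 - id j) ha (inv_ne_zero hw),
    laurentMoment_neg_sub_inv s c id 1 hw, ← mul_assoc, mul_left_comm _ 2, hexp, zpow_one,
    Int.cast_one, mul_left_comm 2, mul_assoc (exp (-τ)), mul_right_inj' hw]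
  norm_num [reproductionFunctional, sub_eq_zero, eval_comp]

end Reproduction

theorem evenSymmetric_reproduction_iff_at_inv_general (k d : ℕ) (θ : ℂ)
    (a : ℂ → ℂ)
    (ha : ∃ (c : ℤ → ℝ) (s : Finset ℤ), ∀ z : ℂ, z ≠ 0 → a z = ∑ j ∈ s, (c j : ℂ) * z ^ j)
    (hsym : ∀ z : ℂ, z ≠ 0 → z * a z = a z⁻¹) :
    (∀ r < d, iteratedDeriv r a (exp (-θ / 2 ^ (k + 1))) =
        2 * exp ((1 / 2 + (r : ℂ)) * θ / 2 ^ (k + 1)) *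
          ∏ i ∈ range r, (-(1 / 2) - (i : ℂ))) ↔
    (∀ r < d, iteratedDeriv r a (exp (-θ / 2 ^ (k + 1)))⁻¹ =
        2 * exp (-(1 / 2 + (r : ℂ)) * θ / 2 ^ (k + 1)) *
          ∏ i ∈ range r, (-(1 / 2) - (i : ℂ))) := by
  obtain ⟨c, s, hc⟩ := ha
  have hc_refl := eq_sum_zpow_neg_sub_of_symm s (fun j => (c j : ℂ)) id 1 hc (by simpa using hsym)
  simp only [mul_div_assoc, neg_div, ← descPochhammer_eval_eq_prod_range,
    iteratedDeriv_exp_neg_eq_iff _ _ hc, iteratedDeriv_inv_exp_neg_eq_iff _ _ hc_refl]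
  exact forall_descPochhammer_iff_comp_of_involutive _ (by compute_degree!) (by simp [sub_comp])

/-- For an even-symmetric real Laurent polynomial `a`, the exponential-polynomial
reproduction conditions with shift parameter `p = -1/2` up to order `d-1` hold at
`w = e^{-θ/2^{k+1}}` if and only if they hold at `w⁻¹`. -/
theorem evenSymmetric_reproduction_iff_at_inv (k d : ℕ) (hd : 1 ≤ d) (θ : ℂ)
    (hθ : (∃ t : ℝ, 0 < t ∧ θ = (t : ℂ)) ∨
          (∃ β : ℝ, 0 ≤ β ∧ β < Real.pi ∧ θ = (β : ℂ) * I))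
    (a : ℂ → ℂ)
    (ha : ∃ (c : ℤ → ℝ) (s : Finset ℤ), ∀ z : ℂ, z ≠ 0 → a z = ∑ j ∈ s, (c j : ℂ) * z ^ j)
    (hsym : ∀ z : ℂ, z ≠ 0 → z * a z = a z⁻¹) :
    (∀ r < d, iteratedDeriv r a (exp (-θ / 2 ^ (k + 1))) =
        2 * exp ((1 / 2 + (r : ℂ)) * θ / 2 ^ (k + 1)) *
          ∏ i ∈ range r, (-(1 / 2) - (i : ℂ))) ↔
    (∀ r < d, iteratedDeriv r a (exp (-θ / 2 ^ (k + 1)))⁻¹ =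
        2 * exp (-(1 / 2 + (r : ℂ)) * θ / 2 ^ (k + 1)) *
          ∏ i ∈ range r, (-(1 / 2) - (i : ℂ))) :=
  evenSymmetric_reproduction_iff_at_inv_general k d θ a ha hsym
end

section
/- Let ρ ≥ 1 be an integer and let c be a Laurent polynomial over ℂ supported in degrees [1−ρ, ρ−1], i.e. c(z) = Σ_{j=1−ρ}^{ρ−1} c_j z^j, satisfying the symmetry c(z) = c(z⁻¹) for all z ≠ 0. Let w_1, …, w_m ∈ ℂ∖{0, 1, −1} be pairwise distinct points such that w_ℓ·w_j ≠ 1 for all ℓ, j, and let τ_1, …, τ_m ≥ 1 be integers with τ_1 + ⋯ + τ_m = ρ. If for every ℓ = 1, …, m and every s = 0, …, τ_ℓ−1 the s-th complex derivative of c at w_ℓ vanishes, then c is identically zero. -/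
/-!
Multiplying by `z ^ (ρ - 1)` turns `c` into a polynomial `P` of degree at most `2ρ - 2`, and away
from `0` the vanishing order of `c` at a point is the root multiplicity of `P` there. The Hermite
conditions make `P` vanish to order `τ ℓ` at `w ℓ`; since inversion is locally biholomorphic
away from `0`, the symmetry `c z = c z⁻¹` transports this to `(w ℓ)⁻¹`. The `2m` points `w ℓ`,
`(w ℓ)⁻¹` are distinct because `w ℓ * w j ≠ 1`, so `P` has at least `2ρ` roots counted with
multiplicity and must vanish.
-/

open Finset Polynomial Filter Topology

theorem Polynomial.exists_eval_eq_pow_mul_sum_zpow {K : Type*} [Field K] (I : Finset ℤ)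
    (a : ℤ → K) (N D : ℕ) (hI : ∀ j ∈ I, 0 ≤ j + N ∧ j + N ≤ D) :
    ∃ P : K[X], P.natDegree ≤ D ∧ ∀ z ≠ 0, P.eval z = z ^ N * ∑ j ∈ I, a j * z ^ j := by
  refine ⟨∑ j ∈ I, C (a j) * X ^ (j + N).toNat, natDegree_sum_le_of_forall_le _ _ fun j hj =>
    (natDegree_C_mul_X_pow_le _ _).trans (by have := hI j hj; omega), fun z hz => ?_⟩
  rw [eval_finsetSum, mul_sum]
  refine sum_congr rfl fun j hj => ?_
  rw [eval_C_mul, eval_X_pow, ← zpow_natCast, Int.toNat_of_nonneg (hI j hj).1, zpow_add₀ hz,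
    zpow_natCast]
  ring

theorem Polynomial.sum_le_natDegree_of_le_rootMultiplicity {K ι : Type*} [Field K]
    {p : K[X]} {s : Finset ι} {x : ι → K} (hx : Set.InjOn x s) {n : ι → ℕ}
    (hn : ∀ i ∈ s, n i ≤ p.rootMultiplicity (x i)) :
    ∑ i ∈ s, n i ≤ p.natDegree := by
  classical
  calc ∑ i ∈ s, n i ≤ ∑ i ∈ s, p.roots.count (x i) :=
        sum_le_sum fun i hi => (count_roots p).symm ▸ hn i hi
    _ = ∑ a ∈ s.image x, p.roots.count a := by rw [sum_image hx]
    _ ≤ ∑ a ∈ s.image x ∪ p.roots.toFinset, p.roots.count a :=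
        sum_le_sum_of_subset subset_union_left
    _ = Multiset.card p.roots := Multiset.sum_count_eq_card fun a ha => by simp [ha]
    _ ≤ p.natDegree := card_roots' p

section Analytic

variable {𝕜 : Type*} [NontriviallyNormedField 𝕜]

theorem Polynomial.analyticOrderAt_eval {p : 𝕜[X]} (hp : p ≠ 0) (a : 𝕜) :
    analyticOrderAt (fun z => p.eval z) a = p.rootMultiplicity a := by
  rw [(AnalyticOnNhd.eval_polynomial p a (Set.mem_univ a)).analyticOrderAt_eq_natCast]
  refine ⟨fun z => (p /ₘ (X - C a) ^ p.rootMultiplicity a).eval z,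
    AnalyticOnNhd.eval_polynomial _ a (Set.mem_univ a),
    eval_divByMonic_pow_rootMultiplicity_ne_zero a hp,
    Eventually.of_forall fun z => ?_⟩
  conv_lhs => rw [← pow_mul_divByMonic_rootMultiplicity_eq p a]
  simp

variable {f : 𝕜 → 𝕜} {p : 𝕜[X]} {N : ℕ} {a : 𝕜}

theorem analyticAt_of_eval_eq_pow_mul (hpf : ∀ z ≠ 0, p.eval z = z ^ N * f z) (ha : a ≠ 0) :
    AnalyticAt 𝕜 f a := by
  have hf : f =ᶠ[𝓝 a] fun z => (z ^ N)⁻¹ * p.eval z := by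
    filter_upwards [isOpen_ne.mem_nhds ha] with z hz
    rw [hpf z hz, inv_mul_cancel_left₀ (pow_ne_zero N hz)]
  refine AnalyticAt.congr ?_ hf.symm
  have : AnalyticAt 𝕜 (fun z => p.eval z) a := AnalyticOnNhd.eval_polynomial p a (Set.mem_univ a)
  fun_prop (disch := simp [ha])

theorem analyticOrderAt_eq_rootMultiplicity_of_eval_eq_pow_mul (hp : p ≠ 0)
    (hpf : ∀ z ≠ 0, p.eval z = z ^ N * f z) (ha : a ≠ 0) :
    analyticOrderAt f a = p.rootMultiplicity a := by
  have hpow : analyticOrderAt (fun z : 𝕜 => z ^ N) a = 0 :=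
    analyticOrderAt_eq_zero.mpr (Or.inr (pow_ne_zero N ha))
  rw [← p.analyticOrderAt_eval hp, ← zero_add (analyticOrderAt f a), ← hpow,
    ← analyticOrderAt_mul (by fun_prop) (analyticAt_of_eval_eq_pow_mul hpf ha)]
  refine analyticOrderAt_congr ?_
  filter_upwards [isOpen_ne.mem_nhds ha] with z hz
  exact (hpf z hz).symm

theorem analyticOrderAt_inv_eq_of_forall_eq_inv [CompleteSpace 𝕜] [CharZero 𝕜]
    (hsym : ∀ z ≠ 0, f z = f z⁻¹) (ha : a ≠ 0) :
    analyticOrderAt f a⁻¹ = analyticOrderAt f a := by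
  have hinv : analyticOrderAt (f ∘ Inv.inv) a⁻¹ = analyticOrderAt f a := by
    rw [analyticOrderAt_comp_of_deriv_ne_zero (analyticAt_inv (inv_ne_zero ha)) (by simp [ha]),
      inv_inv]
  rw [← hinv]
  refine analyticOrderAt_congr ?_
  filter_upwards [isOpen_ne.mem_nhds (inv_ne_zero ha)] with z hz
  exact hsym z hz

end Analytic

theorem symmetric_laurent_hermite_uniqueness_general (ρ : ℕ) (hρ : 1 ≤ ρ)
    (c : ℂ → ℂ) (co : ℤ → ℂ)
    (hc : ∀ z : ℂ, z ≠ 0 →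
      c z = ∑ j ∈ Finset.Icc (1 - (ρ : ℤ)) ((ρ : ℤ) - 1), co j * z ^ j)
    (hsym : ∀ z : ℂ, z ≠ 0 → c z = c z⁻¹)
    (m : ℕ) (w : Fin m → ℂ)
    (hw0 : ∀ ℓ, w ℓ ≠ 0)
    (hinj : Function.Injective w)
    (hprod : ∀ ℓ j, w ℓ * w j ≠ 1)
    (τ : Fin m → ℕ) (hsum : ∑ ℓ, τ ℓ = ρ)
    (hvan : ∀ ℓ, ∀ s < τ ℓ, iteratedDeriv s c (w ℓ) = 0) :
    ∀ z : ℂ, z ≠ 0 → c z = 0 := by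
  obtain ⟨P, hPdeg, hP⟩ := exists_eval_eq_pow_mul_sum_zpow (Icc (1 - (ρ : ℤ)) ((ρ : ℤ) - 1)) co
    (ρ - 1) (2 * ρ - 2) fun j hj => by rw [mem_Icc] at hj; omega
  replace hP : ∀ z ≠ 0, P.eval z = z ^ (ρ - 1) * c z := fun z hz => hc z hz ▸ hP z hz
  suffices P = 0 by intro z hz; simpa [this, hz] using hP z hz
  by_contra hP0
  set x : Fin m ⊕ Fin m → ℂ := Sum.elim w fun ℓ => (w ℓ)⁻¹
  have hx : Function.Injective x := hinj.sumElim (inv_injective.comp hinj) fun ℓ j h =>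
    hprod ℓ j (by rw [h, inv_mul_cancel₀ (hw0 j)])
  have hx0 : ∀ i, x i ≠ 0 := by rintro (ℓ | ℓ) <;> simp [x, hw0]
  have hord_w : ∀ ℓ, (τ ℓ : ℕ∞) ≤ analyticOrderAt c (w ℓ) := fun ℓ =>
    (natCast_le_analyticOrderAt_iff_iteratedDeriv_eq_zero
      (analyticAt_of_eval_eq_pow_mul hP (hw0 ℓ))).mpr (hvan ℓ)
  have hord_x : ∀ i, ((Sum.elim τ τ i : ℕ) : ℕ∞) ≤ analyticOrderAt c (x i) := by
    rintro (ℓ | ℓ)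
    · exact hord_w ℓ
    · exact (analyticOrderAt_inv_eq_of_forall_eq_inv hsym (hw0 ℓ)).symm ▸ hord_w ℓ
  have hmult : ∀ i ∈ univ, Sum.elim τ τ i ≤ P.rootMultiplicity (x i) := fun i _ => by
    rw [← Nat.cast_le (α := ℕ∞),
      ← analyticOrderAt_eq_rootMultiplicity_of_eval_eq_pow_mul hP0 hP (hx0 i)]
    exact hord_x i
  have hroots := sum_le_natDegree_of_le_rootMultiplicity hx.injOn hmult
  simp only [Fintype.sum_sum_type, Sum.elim_inl, Sum.elim_inr, hsum] at hroots
  omega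

/-- Uniqueness for the symmetric Hermite interpolation problem: a symmetric Laurent
polynomial supported in degrees `[1-ρ, ρ-1]` whose derivatives up to order `τ_ℓ - 1`
vanish at `m` suitable nodes `w_ℓ` with `τ_1 + ⋯ + τ_m = ρ` is identically zero. -/
theorem symmetric_laurent_hermite_uniqueness (ρ : ℕ) (hρ : 1 ≤ ρ)
    (c : ℂ → ℂ) (co : ℤ → ℂ)
    (hc : ∀ z : ℂ, z ≠ 0 →
      c z = ∑ j ∈ Finset.Icc (1 - (ρ : ℤ)) ((ρ : ℤ) - 1), co j * z ^ j)
    (hsym : ∀ z : ℂ, z ≠ 0 → c z = c z⁻¹)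
    (m : ℕ) (hm : 1 ≤ m) (w : Fin m → ℂ)
    (hw0 : ∀ ℓ, w ℓ ≠ 0) (hw1 : ∀ ℓ, w ℓ ≠ 1) (hwm1 : ∀ ℓ, w ℓ ≠ -1)
    (hinj : Function.Injective w)
    (hprod : ∀ ℓ j, w ℓ * w j ≠ 1)
    (τ : Fin m → ℕ) (hτ : ∀ ℓ, 1 ≤ τ ℓ) (hsum : ∑ ℓ, τ ℓ = ρ)
    (hvan : ∀ ℓ, ∀ s < τ ℓ, iteratedDeriv s c (w ℓ) = 0) :
    ∀ z : ℂ, z ≠ 0 → c z = 0 :=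
  symmetric_laurent_hermite_uniqueness_general ρ hρ c co hc hsym m w hw0 hinj hprod τ hsum hvan
end

section
/- Let B be a Laurent polynomial over ℂ that is odd-symmetric, i.e. B(z) = B(z⁻¹) for all z ≠ 0. Let w_1, …, w_m ∈ ℂ∖{0, 1, −1} be pairwise distinct points with w_ℓ·w_j ≠ 1 for all ℓ, j, let τ_1, …, τ_m ≥ 1 be integers, set μ := τ_1 + ⋯ + τ_m, and assume B(w_ℓ) ≠ 0 for every ℓ. Then there exists a unique Laurent polynomial c over ℂ supported in degrees [1−μ, μ−1] with c(z) = c(z⁻¹) for all z ≠ 0 such that for every ℓ = 1, …, m and every s = 0, …, τ_ℓ−1 the s-th complex derivative of c at w_ℓ equals 2 times the s-th complex derivative of z ↦ 1/B(z) at w_ℓ; moreover this c satisfies the same conditions at the points w_ℓ⁻¹, i.e. the s-th derivative of c at w_ℓ⁻¹ equals 2 times the s-th derivative of 1/B at w_ℓ⁻¹ for s = 0, …, τ_ℓ−1. -/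
/-!
The symmetric Laurent polynomials supported in `[1-μ, μ-1]` form a space of dimension `μ`
(one free coefficient for each `|j| < μ`), and the interpolation conditions at the `w_ℓ` are
`μ` linear conditions, so existence follows from uniqueness. Since `z ↦ z⁻¹` has nonzero
derivative away from `0`, a function invariant under it vanishes to the same order at `w` and
at `w⁻¹`. Hence if a symmetric `c` satisfies the homogeneous conditions, `z ^ μ * c z` is a
polynomial of degree `< 2μ` vanishing to order `τ_ℓ` at each of the `2m` distinct points
`w_ℓ, w_ℓ⁻¹`, so `c = 0`. The same invariance, applied to `c - 2 / B`, transfers the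
conditions from `w_ℓ` to `w_ℓ⁻¹`.
-/

open Finset Polynomial Topology Filter

section Analytic

variable {𝕜 E : Type*} [NontriviallyNormedField 𝕜] [NormedAddCommGroup E] [NormedSpace 𝕜 E]

theorem natCast_le_analyticOrderAt_sub_iff [CharZero 𝕜] [CompleteSpace E] {f g : 𝕜 → E}
    {x : 𝕜} (hf : AnalyticAt 𝕜 f x) (hg : AnalyticAt 𝕜 g x) {n : ℕ} :
    n ≤ analyticOrderAt (f - g) x ↔ ∀ i < n, iteratedDeriv i f x = iteratedDeriv i g x := by
  rw [natCast_le_analyticOrderAt_iff_iteratedDeriv_eq_zero (hf.sub hg)]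
  simp only [iteratedDeriv_sub hf.contDiffAt hg.contDiffAt, sub_eq_zero]

theorem analyticOrderAt_inv_eq_of_forall_eq_inv_s12 [CompleteSpace 𝕜] [CharZero 𝕜]
    {f : 𝕜 → E} (hf : ∀ z ≠ 0, f z = f z⁻¹) {x : 𝕜} (hx : x ≠ 0) :
    analyticOrderAt f x⁻¹ = analyticOrderAt f x := by
  rw [← analyticOrderAt_comp_of_deriv_ne_zero (f := f) (analyticAt_inv hx) (by simp [hx])]
  exact analyticOrderAt_congr <| (eventually_ne_nhds hx).mono fun z hz => (hf z hz).symm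

theorem iteratedDeriv_inv_eq_iff_of_forall_eq_inv [CompleteSpace 𝕜] [CharZero 𝕜]
    [CompleteSpace E] {f g : 𝕜 → E} (hf : ∀ z ≠ 0, f z = f z⁻¹) (hg : ∀ z ≠ 0, g z = g z⁻¹)
    {x : 𝕜} (hx : x ≠ 0) (hfx : AnalyticAt 𝕜 f x) (hgx : AnalyticAt 𝕜 g x)
    (hfx' : AnalyticAt 𝕜 f x⁻¹) (hgx' : AnalyticAt 𝕜 g x⁻¹) (n : ℕ) :
    (∀ i < n, iteratedDeriv i f x⁻¹ = iteratedDeriv i g x⁻¹) ↔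
      ∀ i < n, iteratedDeriv i f x = iteratedDeriv i g x := by
  have hfg : ∀ z ≠ 0, (f - g) z = (f - g) z⁻¹ := fun z hz => by simp [hf z hz, hg z hz]
  rw [← natCast_le_analyticOrderAt_sub_iff hfx' hgx',
    analyticOrderAt_inv_eq_of_forall_eq_inv_s12 hfg hx, natCast_le_analyticOrderAt_sub_iff hfx hgx]

theorem analyticAt_sum_mul_zpow (s : Finset ℤ) (e : ℤ → 𝕜) {x : 𝕜} (hx : x ≠ 0) :
    AnalyticAt 𝕜 (fun z => ∑ j ∈ s, e j * z ^ j) x :=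
  Finset.analyticAt_fun_sum _ fun _ _ => analyticAt_const.mul (analyticAt_id.zpow hx)

theorem Polynomial.analyticOrderAt_eval_s12 {P : 𝕜[X]} (hP : P ≠ 0) (x : 𝕜) :
    analyticOrderAt (fun z => P.eval z) x = P.rootMultiplicity x := by
  obtain ⟨Q, hPQ, hQ⟩ := P.exists_eq_pow_rootMultiplicity_mul_and_not_dvd hP x
  rw [(AnalyticOnNhd.eval_polynomial P x trivial).analyticOrderAt_eq_natCast]
  refine ⟨fun z => Q.eval z, AnalyticOnNhd.eval_polynomial Q x trivial,
    by rwa [dvd_iff_isRoot] at hQ, .of_forall fun z => ?_⟩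
  conv_lhs => rw [hPQ]
  simp

end Analytic

theorem Polynomial.eq_zero_of_degree_lt_sum_rootMultiplicity {K ι : Type*} [Field K]
    [Fintype ι] {P : K[X]} {q : ι → K} (hq : Function.Injective q) {τ : ι → ℕ}
    (hτ : ∀ i, τ i ≤ P.rootMultiplicity (q i)) (hdeg : P.degree < ∑ i, τ i) : P = 0 := by
  by_contra hP
  have hdvd : ∏ i, (X - C (q i)) ^ τ i ∣ P :=
    prod_dvd_of_coprime (fun i _ j _ hij => (pairwise_coprime_X_sub_C hq hij).pow)
      fun i _ => (le_rootMultiplicity_iff hP).1 (hτ i)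
  have hle := natDegree_le_of_dvd hdvd hP
  rw [natDegree_prod _ _ fun i _ => pow_ne_zero _ (X_sub_C_ne_zero (q i))] at hle
  simp only [natDegree_pow, natDegree_X_sub_C, mul_one] at hle
  rw [degree_eq_natDegree hP, Nat.cast_lt] at hdeg
  omega

section Laurent

variable {𝕜 : Type*} [NontriviallyNormedField 𝕜] (μ : ℕ)

noncomputable def laurentSum : (ℤ → 𝕜) →ₗ[𝕜] 𝕜 → 𝕜 where
  toFun e z := ∑ j ∈ Icc (1 - (μ : ℤ)) (μ - 1), e j * z ^ j
  map_add' e e' := by ext z; simp [add_mul, sum_add_distrib]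
  map_smul' c e := by ext z; simp [mul_sum, mul_assoc]

theorem laurentSum_apply (e : ℤ → 𝕜) (z : 𝕜) :
    laurentSum μ e z = ∑ j ∈ Icc (1 - (μ : ℤ)) (μ - 1), e j * z ^ j := rfl

def symmCoeff : (Fin μ → 𝕜) →ₗ[𝕜] ℤ → 𝕜 where
  toFun a j := if h : j.natAbs < μ then a ⟨j.natAbs, h⟩ else 0
  map_add' a b := by ext j; by_cases h : j.natAbs < μ <;> simp [h]
  map_smul' c a := by ext j; by_cases h : j.natAbs < μ <;> simp [h]

noncomputable def laurentPoly (e : ℤ → 𝕜) : 𝕜[X] :=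
  ∑ j ∈ Icc (1 - (μ : ℤ)) (μ - 1), C (e j) * X ^ (j + μ).toNat

variable {μ}

theorem analyticAt_laurentSum (e : ℤ → 𝕜) {x : 𝕜} (hx : x ≠ 0) :
    AnalyticAt 𝕜 (laurentSum μ e) x :=
  analyticAt_sum_mul_zpow (Icc (1 - (μ : ℤ)) (μ - 1)) e hx

theorem laurentSum_inv {e : ℤ → 𝕜} (he : ∀ j, e (-j) = e j) (z : 𝕜) :
    laurentSum μ e z⁻¹ = laurentSum μ e z := by
  rw [laurentSum_apply, laurentSum_apply]
  refine sum_nbij' (fun j => -j) (fun j => -j) ?_ ?_ (fun _ _ => neg_neg _)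
    (fun _ _ => neg_neg _) fun j _ => ?_
  · intro j hj; simp only [mem_Icc] at hj ⊢; omega
  · intro j hj; simp only [mem_Icc] at hj ⊢; omega
  · rw [he, inv_zpow, ← zpow_neg]

theorem symmCoeff_neg (a : Fin μ → 𝕜) (j : ℤ) : symmCoeff μ a (-j) = symmCoeff μ a j := by
  simp [symmCoeff]

theorem symmCoeff_natCast (a : Fin μ → 𝕜) (k : Fin μ) : symmCoeff μ a k = a k := by
  simp [symmCoeff]

theorem eval_laurentPoly (e : ℤ → 𝕜) {z : 𝕜} (hz : z ≠ 0) :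
    (laurentPoly μ e).eval z = z ^ μ * laurentSum μ e z := by
  rw [laurentPoly, laurentSum_apply, eval_finsetSum, mul_sum]
  refine sum_congr rfl fun j hj => ?_
  rw [mem_Icc] at hj
  rw [eval_mul, eval_C, eval_pow, eval_X, ← zpow_natCast, Int.toNat_of_nonneg (by omega),
    zpow_add₀ hz, zpow_natCast]
  ring

theorem degree_laurentPoly_lt (e : ℤ → 𝕜) : (laurentPoly μ e).degree < (2 * μ : ℕ) := by
  refine (degree_sum_le _ _).trans_lt ((Finset.sup_lt_iff (WithBot.bot_lt_coe _)).2 fun j hj => ?_)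
  rw [mem_Icc] at hj
  have hj' : (j + μ).toNat < 2 * μ := by omega
  exact (degree_C_mul_X_pow_le _ _).trans_lt (by exact_mod_cast hj')

theorem coeff_laurentPoly (e : ℤ → 𝕜) {j : ℤ} (hj : j ∈ Icc (1 - (μ : ℤ)) (μ - 1)) :
    (laurentPoly μ e).coeff (j + μ).toNat = e j := by
  rw [laurentPoly, finsetSum_coeff, sum_eq_single j]
  · simp
  · intro k hk hkj
    rw [coeff_C_mul_X_pow, if_neg]
    rw [mem_Icc] at hj hk
    omega
  · exact fun hj' => absurd hj hj'

theorem analyticOrderAt_laurentSum_le (e : ℤ → 𝕜) {x : 𝕜} (hx : x ≠ 0) :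
    analyticOrderAt (laurentSum μ e) x ≤
      analyticOrderAt (fun z => (laurentPoly μ e).eval z) x := by
  have hev : (fun z => (laurentPoly μ e).eval z) =ᶠ[𝓝 x] (fun z => z ^ μ) * laurentSum μ e :=
    (eventually_ne_nhds hx).mono fun z hz => eval_laurentPoly e hz
  rw [analyticOrderAt_congr hev, analyticOrderAt_mul (by fun_prop) (analyticAt_laurentSum e hx)]
  exact le_add_self

end Laurent

section Interpolation

variable {𝕜 : Type*} [NontriviallyNormedField 𝕜] [CompleteSpace 𝕜] [CharZero 𝕜] {μ : ℕ}
  {ι : Type*} [Fintype ι] {q : ι → 𝕜} {τ : ι → ℕ}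

theorem coeff_eq_zero_of_le_analyticOrderAt_laurentSum (hq0 : ∀ i, q i ≠ 0)
    (hq : Function.Injective (Sum.elim q fun i => (q i)⁻¹)) (hμ : μ = ∑ i, τ i) {e : ℤ → 𝕜}
    (hsymm : ∀ z ≠ 0, laurentSum μ e z = laurentSum μ e z⁻¹)
    (hord : ∀ i, (τ i : ℕ∞) ≤ analyticOrderAt (laurentSum μ e) (q i)) :
    ∀ j ∈ Icc (1 - (μ : ℤ)) (μ - 1), e j = 0 := by
  suffices hP : laurentPoly μ e = 0 from
    fun j hj => by rw [← coeff_laurentPoly e hj, hP, coeff_zero]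
  by_contra hP
  have hmult : ∀ x ≠ 0,
      analyticOrderAt (laurentSum μ e) x ≤ (laurentPoly μ e).rootMultiplicity x :=
    fun x hx => (analyticOrderAt_laurentSum_le e hx).trans_eq (analyticOrderAt_eval_s12 hP x)
  refine hP (eq_zero_of_degree_lt_sum_rootMultiplicity hq (τ := Sum.elim τ τ) ?_ ?_)
  · rintro (i | i)
    · exact_mod_cast (hord i).trans (hmult _ (hq0 i))
    · have := (analyticOrderAt_inv_eq_of_forall_eq_inv_s12 hsymm (hq0 i)).symm
      exact_mod_cast ((hord i).trans_eq this).trans (hmult _ (inv_ne_zero (hq0 i)))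
  · simp only [Fintype.sum_sum_type, Sum.elim_inl, Sum.elim_inr, ← two_mul, ← hμ]
    exact degree_laurentPoly_lt e

theorem laurentSum_eq_of_iteratedDeriv_eq (hq0 : ∀ i, q i ≠ 0)
    (hq : Function.Injective (Sum.elim q fun i => (q i)⁻¹)) (hμ : μ = ∑ i, τ i) {e e' : ℤ → 𝕜}
    (hsymm : ∀ z ≠ 0, laurentSum μ e z = laurentSum μ e z⁻¹)
    (hsymm' : ∀ z ≠ 0, laurentSum μ e' z = laurentSum μ e' z⁻¹)
    (h : ∀ i, ∀ s < τ i, iteratedDeriv s (laurentSum μ e) (q i) =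
      iteratedDeriv s (laurentSum μ e') (q i)) :
    laurentSum μ e = laurentSum μ e' := by
  have hzero := coeff_eq_zero_of_le_analyticOrderAt_laurentSum hq0 hq hμ (e := e - e')
    (fun z hz => by simp [hsymm z hz, hsymm' z hz]) fun i => by
      rw [map_sub, natCast_le_analyticOrderAt_sub_iff (analyticAt_laurentSum _ (hq0 i))
        (analyticAt_laurentSum _ (hq0 i))]
      exact h i
  rw [← sub_eq_zero, ← map_sub]
  ext z
  rw [laurentSum_apply, Pi.zero_apply]
  exact sum_eq_zero fun j hj => by rw [hzero j hj, zero_mul]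

theorem exists_symm_laurentSum_iteratedDeriv_eq (hq0 : ∀ i, q i ≠ 0)
    (hq : Function.Injective (Sum.elim q fun i => (q i)⁻¹)) (hμ : μ = ∑ i, τ i)
    (v : ι → ℕ → 𝕜) :
    ∃ e : ℤ → 𝕜, (∀ j, e (-j) = e j) ∧
      ∀ i, ∀ s < τ i, iteratedDeriv s (laurentSum μ e) (q i) = v i s := by
  let T : (Fin μ → 𝕜) →ₗ[𝕜] (Σ i, Fin (τ i)) → 𝕜 :=
    { toFun a p := iteratedDeriv p.2 (laurentSum μ (symmCoeff μ a)) (q p.1)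
      map_add' a b := by
        ext p
        simp only [map_add, Pi.add_apply]
        exact iteratedDeriv_add (analyticAt_laurentSum _ (hq0 p.1)).contDiffAt
          (analyticAt_laurentSum _ (hq0 p.1)).contDiffAt
      map_smul' c a := by ext p; simp [iteratedDeriv_const_smul_field] }
  have hT : Function.Injective T := by
    refine (injective_iff_map_eq_zero T).2 fun a ha => funext fun k => ?_
    have hord (i : ι) : (τ i : ℕ∞) ≤ analyticOrderAt (laurentSum μ (symmCoeff μ a)) (q i) :=
      (natCast_le_analyticOrderAt_iff_iteratedDeriv_eq_zero
        (analyticAt_laurentSum _ (hq0 i))).2 fun s hs => congrFun ha ⟨i, s, hs⟩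
    have := coeff_eq_zero_of_le_analyticOrderAt_laurentSum hq0 hq hμ
      (fun z _ => (laurentSum_inv (symmCoeff_neg a) z).symm) hord k (by simp; omega)
    rwa [symmCoeff_natCast] at this
  obtain ⟨a, ha⟩ := (LinearMap.injective_iff_surjective_of_finrank_eq_finrank
    (by simp [hμ])).1 hT fun p => v p.1 p.2
  exact ⟨symmCoeff μ a, symmCoeff_neg a, fun i s hs => congrFun ha ⟨i, s, hs⟩⟩

end Interpolation

theorem symmetric_correction_exists_unique_general (B : ℂ → ℂ)
    (hBl : ∃ (b : ℤ → ℂ) (s : Finset ℤ), ∀ z : ℂ, z ≠ 0 → B z = ∑ j ∈ s, b j * z ^ j)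
    (hBsym : ∀ z : ℂ, z ≠ 0 → B z = B z⁻¹)
    (m : ℕ) (w : Fin m → ℂ)
    (hw0 : ∀ ℓ, w ℓ ≠ 0)
    (hinj : Function.Injective w)
    (hprod : ∀ ℓ j, w ℓ * w j ≠ 1)
    (τ : Fin m → ℕ)
    (μ : ℕ) (hμ : μ = ∑ ℓ, τ ℓ)
    (hBw : ∀ ℓ, B (w ℓ) ≠ 0) :
    ∃ c : ℂ → ℂ,
      ((∃ co : ℤ → ℂ, ∀ z : ℂ, z ≠ 0 →
          c z = ∑ j ∈ Finset.Icc (1 - (μ : ℤ)) ((μ : ℤ) - 1), co j * z ^ j) ∧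
       (∀ z : ℂ, z ≠ 0 → c z = c z⁻¹) ∧
       (∀ ℓ, ∀ s < τ ℓ, iteratedDeriv s c (w ℓ) =
          2 * iteratedDeriv s (fun z => (B z)⁻¹) (w ℓ))) ∧
      (∀ ℓ, ∀ s < τ ℓ, iteratedDeriv s c ((w ℓ)⁻¹) =
          2 * iteratedDeriv s (fun z => (B z)⁻¹) ((w ℓ)⁻¹)) ∧
      (∀ c' : ℂ → ℂ,
        (∃ co' : ℤ → ℂ, ∀ z : ℂ, z ≠ 0 →
            c' z = ∑ j ∈ Finset.Icc (1 - (μ : ℤ)) ((μ : ℤ) - 1), co' j * z ^ j) →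
        (∀ z : ℂ, z ≠ 0 → c' z = c' z⁻¹) →
        (∀ ℓ, ∀ s < τ ℓ, iteratedDeriv s c' (w ℓ) =
            2 * iteratedDeriv s (fun z => (B z)⁻¹) (w ℓ)) →
        ∀ z : ℂ, z ≠ 0 → c' z = c z) := by
  obtain ⟨b, sB, hB⟩ := hBl
  have hw : Function.Injective (Sum.elim w fun ℓ => (w ℓ)⁻¹) := hinj.sumElim
    (inv_injective.comp hinj) fun ℓ j h => hprod ℓ j (by rw [h, inv_mul_cancel₀ (hw0 j)])
  have h2B {x : ℂ} (hx : x ≠ 0) (hBx : B x ≠ 0) :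
      AnalyticAt ℂ (fun z => 2 * (B z)⁻¹) x := by
    have hBx' : AnalyticAt ℂ B x := (analyticAt_sum_mul_zpow sB b hx).congr <|
      (eventually_ne_nhds hx).mono fun z hz => (hB z hz).symm
    exact analyticAt_const.mul (hBx'.inv hBx)
  obtain ⟨e, he, hc⟩ := exists_symm_laurentSum_iteratedDeriv_eq hw0 hw hμ
    fun ℓ s => 2 * iteratedDeriv s (fun z => (B z)⁻¹) (w ℓ)
  have hsymm (z : ℂ) (_ : z ≠ 0) : laurentSum μ e z = laurentSum μ e z⁻¹ :=
    (laurentSum_inv he z).symm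
  refine ⟨laurentSum μ e, ⟨⟨e, fun _ _ => rfl⟩, hsymm, hc⟩, fun ℓ => ?_, ?_⟩
  · have hwinv : (w ℓ)⁻¹ ≠ 0 := inv_ne_zero (hw0 ℓ)
    simpa using (iteratedDeriv_inv_eq_iff_of_forall_eq_inv hsymm
      (fun z hz => by rw [hBsym z hz]) (hw0 ℓ) (analyticAt_laurentSum e (hw0 ℓ))
      (h2B (hw0 ℓ) (hBw ℓ)) (analyticAt_laurentSum e hwinv)
      (h2B hwinv (hBsym _ (hw0 ℓ) ▸ hBw ℓ)) (τ ℓ)).2 (by simpa using hc ℓ)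
  · rintro c' ⟨co', hc'⟩ hsym' hc'cond z hz
    replace hc' : ∀ z ≠ 0, c' z = laurentSum μ co' z := hc'
    have hco' : laurentSum μ co' = laurentSum μ e :=
      laurentSum_eq_of_iteratedDeriv_eq hw0 hw hμ
        (fun z hz => by rw [← hc' z hz, ← hc' _ (inv_ne_zero hz), hsym' z hz]) hsymm
        fun ℓ s hs => by
          rw [← EventuallyEq.iteratedDeriv_eq s ((eventually_ne_nhds (hw0 ℓ)).mono hc'),
            hc'cond ℓ s hs, hc ℓ s hs]
    rw [hc' z hz, hco']

/-- Existence and uniqueness of the minimally supported symmetric polynomial correction: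
given an odd-symmetric Laurent polynomial `B` nonvanishing at suitable nodes `w_ℓ`,
there is a unique odd-symmetric Laurent polynomial `c` supported in `[1-μ, μ-1]`,
`μ = τ_1 + ⋯ + τ_m`, with `c^{(s)}(w_ℓ) = 2·(1/B)^{(s)}(w_ℓ)` for `s < τ_ℓ`; moreover
this `c` satisfies the same conditions at the points `w_ℓ⁻¹`. -/
theorem symmetric_correction_exists_unique (B : ℂ → ℂ)
    (hBl : ∃ (b : ℤ → ℂ) (s : Finset ℤ), ∀ z : ℂ, z ≠ 0 → B z = ∑ j ∈ s, b j * z ^ j)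
    (hBsym : ∀ z : ℂ, z ≠ 0 → B z = B z⁻¹)
    (m : ℕ) (hm : 1 ≤ m) (w : Fin m → ℂ)
    (hw0 : ∀ ℓ, w ℓ ≠ 0) (hw1 : ∀ ℓ, w ℓ ≠ 1) (hwm1 : ∀ ℓ, w ℓ ≠ -1)
    (hinj : Function.Injective w)
    (hprod : ∀ ℓ j, w ℓ * w j ≠ 1)
    (τ : Fin m → ℕ) (hτ : ∀ ℓ, 1 ≤ τ ℓ)
    (μ : ℕ) (hμ : μ = ∑ ℓ, τ ℓ)
    (hBw : ∀ ℓ, B (w ℓ) ≠ 0) :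
    ∃ c : ℂ → ℂ,
      ((∃ co : ℤ → ℂ, ∀ z : ℂ, z ≠ 0 →
          c z = ∑ j ∈ Finset.Icc (1 - (μ : ℤ)) ((μ : ℤ) - 1), co j * z ^ j) ∧
       (∀ z : ℂ, z ≠ 0 → c z = c z⁻¹) ∧
       (∀ ℓ, ∀ s < τ ℓ, iteratedDeriv s c (w ℓ) =
          2 * iteratedDeriv s (fun z => (B z)⁻¹) (w ℓ))) ∧
      (∀ ℓ, ∀ s < τ ℓ, iteratedDeriv s c ((w ℓ)⁻¹) =
          2 * iteratedDeriv s (fun z => (B z)⁻¹) ((w ℓ)⁻¹)) ∧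
      (∀ c' : ℂ → ℂ,
        (∃ co' : ℤ → ℂ, ∀ z : ℂ, z ≠ 0 →
            c' z = ∑ j ∈ Finset.Icc (1 - (μ : ℤ)) ((μ : ℤ) - 1), co' j * z ^ j) →
        (∀ z : ℂ, z ≠ 0 → c' z = c' z⁻¹) →
        (∀ ℓ, ∀ s < τ ℓ, iteratedDeriv s c' (w ℓ) =
            2 * iteratedDeriv s (fun z => (B z)⁻¹) (w ℓ)) →
        ∀ z : ℂ, z ≠ 0 → c' z = c z) :=
  symmetric_correction_exists_unique_general B hBl hBsym m w hw0 hinj hprod τ μ hμ hBw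
end

section
/- Fix an integer k ≥ 0, an integer m ≥ 1, pairwise distinct θ_1, …, θ_m each either a positive real number or θ_ℓ = iβ_ℓ with β_ℓ ∈ (0,π), and integers τ_1, …, τ_m ≥ 1; set N := 2(τ_1 + ⋯ + τ_m) and w_ℓ := e^{−θ_ℓ/2^{k+1}}, and assume the 2m points w_1, w_1⁻¹, …, w_m, w_m⁻¹ are pairwise distinct. Let K ∈ ℂ∖{0}, define B(z) := K·z^{−N/2}·∏_{ℓ=1}^{m}[(e^{θ_ℓ/2^{k+1}}z + 1)(e^{−θ_ℓ/2^{k+1}}z + 1)]^{τ_ℓ}, let c be a Laurent polynomial over ℂ supported in degrees [1−N/2, N/2−1] with c(z) = c(z⁻¹) for all z ≠ 0, and set a(z) := B(z)·c(z). If for every ℓ = 1, …, m and every s = 0, …, τ_ℓ−1 one has: the s-th complex derivative of a at w_ℓ and at w_ℓ⁻¹ both equal 2 when s = 0 and equal 0 when s ≥ 1, then a(z) + a(−z) = 2 for every z ≠ 0; that is, the subdivision symbol a is interpolatory. -/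
/-!
Clearing denominators, `z ^ (N - 1) * a z = P z` for a polynomial `P` of degree at most `2N - 2`,
and `F z := P z - P (-z) - 2 z ^ (N - 1)` equals `z ^ (N - 1) * (a z + a (-z) - 2)`. The B-spline
factor makes `P` vanish to order `τ_ℓ` at `-w_ℓ` and `-w_ℓ⁻¹`, and the reproduction conditions make
`P - 2 z ^ (N - 1)` vanish to the same order at `w_ℓ` and `w_ℓ⁻¹`; hence the odd polynomial `F`
vanishes to order `τ_ℓ` at all of `±w_ℓ^{±1}`. These `4m` points are distinct, because the
`w_ℓ^{±1}` are distinct and lie in the open right half-plane (as `|Im θ_ℓ| < π`), so `F` has `2N`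
zeros counted with multiplicity and must vanish.
-/

open Complex Finset Filter Topology Polynomial

namespace Polynomial

theorem X_sub_C_pow_dvd_comp_neg {R : Type*} [CommRing R] {p : R[X]} {v : R} {n : ℕ}
    (h : (X - C v) ^ n ∣ p) : (X - C (-v)) ^ n ∣ p.comp (-X) := by
  obtain ⟨q, rfl⟩ := h
  refine ⟨(-1) ^ n * q.comp (-X), ?_⟩
  rw [mul_comp, pow_comp, sub_comp, X_comp, C_comp, C_neg,
    show -X - C v = (-1 : R[X]) * (X - -C v) by ring, mul_pow]
  ring

theorem natDegree_prod_X_sub_C_pow {R : Type*} [CommRing R] [Nontrivial R]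
    {ι : Type*} [Fintype ι] (x : ι → R) (n : ι → ℕ) :
    (∏ i, (X - C (x i)) ^ n i).natDegree = ∑ i, n i := by
  rw [natDegree_prod_of_monic _ _ fun i _ => (monic_X_sub_C _).pow _]
  simp only [(monic_X_sub_C _).natDegree_pow, natDegree_X_sub_C, mul_one]

theorem eq_zero_of_X_sub_C_pow_dvd {R : Type*} [Field R] {ι : Type*} [Fintype ι]
    {p : R[X]} {x : ι → R} (hx : Function.Injective x) {n : ι → ℕ}
    (hdvd : ∀ i, (X - C (x i)) ^ n i ∣ p) (hdeg : p.natDegree < ∑ i, n i) : p = 0 := by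
  by_contra hp
  have hprod : ∏ i, (X - C (x i)) ^ n i ∣ p :=
    Fintype.prod_dvd_of_coprime (fun i j hij => (pairwise_coprime_X_sub_C hx hij).pow) hdvd
  have := natDegree_le_of_dvd hprod hp
  rw [natDegree_prod_X_sub_C_pow] at this
  omega

theorem exists_eval_eq_pow_mul_laurent {R : Type*} [Field R] (co : ℤ → R) (d : ℕ) :
    ∃ P : R[X], P.natDegree ≤ 2 * d ∧
      ∀ z : R, z ≠ 0 → z ^ d * ∑ j ∈ Icc (-(d : ℤ)) d, co j * z ^ j = P.eval z := by
  refine ⟨∑ j ∈ Icc (-(d : ℤ)) d, C (co j) * X ^ (j + d).toNat, ?_, fun z hz => ?_⟩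
  · refine natDegree_sum_le_of_forall_le _ _ fun j hj => (natDegree_C_mul_le _ _).trans ?_
    rw [natDegree_X_pow]
    have := mem_Icc.1 hj
    omega
  · rw [eval_finsetSum, mul_sum]
    refine sum_congr rfl fun j hj => ?_
    have hj : 0 ≤ j + d := by linarith [(mem_Icc.1 hj).1]
    rw [eval_mul, eval_C, eval_pow, eval_X, ← zpow_natCast z (j + d).toNat,
      Int.toNat_of_nonneg hj, zpow_add₀ hz, zpow_natCast]
    ring

variable {𝕜 : Type*} [NontriviallyNormedField 𝕜]

theorem analyticAt_eval (p : 𝕜[X]) (v : 𝕜) : AnalyticAt 𝕜 (fun z => p.eval z) v := by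
  have := analyticAt_id.aeval_polynomial (𝕜 := 𝕜) (A := 𝕜) (z := v) p
  simp only [coe_aeval_eq_eval, id] at this
  exact this

theorem analyticOrderAt_eval_s13 {p : 𝕜[X]} (hp : p ≠ 0) (v : 𝕜) :
    analyticOrderAt (fun z => p.eval z) v = p.rootMultiplicity v := by
  have hsplit : (fun z => p.eval z) =
      (· - v) ^ p.rootMultiplicity v * fun z => (p /ₘ (X - C v) ^ p.rootMultiplicity v).eval z := by
    conv_lhs => rw [← p.pow_mul_divByMonic_rootMultiplicity_eq v]
    ext z
    simp
  rw [hsplit, analyticOrderAt_mul (by fun_prop) (analyticAt_eval _ v),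
    analyticOrderAt_centeredMonomial,
    analyticOrderAt_eq_zero.2 (.inr (by exact eval_divByMonic_pow_rootMultiplicity_ne_zero v hp)),
    add_zero]

theorem X_sub_C_pow_dvd_of_le_analyticOrderAt {p : 𝕜[X]} {v : 𝕜} {n : ℕ}
    (h : (n : ℕ∞) ≤ analyticOrderAt (fun z => p.eval z) v) : (X - C v) ^ n ∣ p := by
  rcases eq_or_ne p 0 with rfl | hp
  · exact dvd_zero _
  rw [← le_rootMultiplicity_iff hp]
  rwa [analyticOrderAt_eval_s13 hp, Nat.cast_le] at h

theorem analyticAt_of_eventually_mul_eq_eval {f : 𝕜 → 𝕜} {p q : 𝕜[X]} {v : 𝕜}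
    (hq : q.eval v ≠ 0) (hpq : ∀ᶠ z in 𝓝 v, q.eval z * f z = p.eval z) : AnalyticAt 𝕜 f v := by
  refine ((analyticAt_eval p v).div (analyticAt_eval q v) hq).congr ?_
  filter_upwards [hpq, (q.continuous.continuousAt (x := v)).eventually_ne hq] with z h hz
  rw [Pi.div_apply, ← h, mul_div_cancel_left₀ _ hz]

theorem X_sub_C_pow_dvd_of_iteratedDeriv_eq_zero [CharZero 𝕜] [CompleteSpace 𝕜]
    {f : 𝕜 → 𝕜} {p q : 𝕜[X]} {v : 𝕜} {n : ℕ} (hq : q.eval v ≠ 0)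
    (hpq : ∀ᶠ z in 𝓝 v, q.eval z * f z = p.eval z) (hf : ∀ s < n, iteratedDeriv s f v = 0) :
    (X - C v) ^ n ∣ p := by
  have hf_an := analyticAt_of_eventually_mul_eq_eval hq hpq
  apply X_sub_C_pow_dvd_of_le_analyticOrderAt
  calc (n : ℕ∞) ≤ analyticOrderAt f v :=
        (natCast_le_analyticOrderAt_iff_iteratedDeriv_eq_zero hf_an).2 hf
    _ ≤ analyticOrderAt (fun z => q.eval z) v + analyticOrderAt f v := le_add_self
    _ = analyticOrderAt (fun z => p.eval z) v := by
        rw [← analyticOrderAt_mul (analyticAt_eval q v) hf_an]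
        exact analyticOrderAt_congr hpq

theorem X_sub_C_pow_dvd_sub_C_mul_X_pow [CharZero 𝕜] [CompleteSpace 𝕜] {a : 𝕜 → 𝕜} {P : 𝕜[X]}
    {D n : ℕ} {v γ : 𝕜} (hv : v ≠ 0) (ha : ∀ z, z ≠ 0 → z ^ D * a z = P.eval z)
    (hrep : ∀ s < n, iteratedDeriv s a v = if s = 0 then γ else 0) :
    (X - C v) ^ n ∣ P - C γ * X ^ D := by
  have hpq : ∀ᶠ z in 𝓝 v, (X ^ D : 𝕜[X]).eval z * a z = P.eval z := by
    filter_upwards [eventually_ne_nhds hv] with z hz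
    simpa using ha z hz
  have hX : (X ^ D : 𝕜[X]).eval v ≠ 0 := by simpa using pow_ne_zero D hv
  have han := analyticAt_of_eventually_mul_eq_eval hX hpq
  refine X_sub_C_pow_dvd_of_iteratedDeriv_eq_zero (f := fun z => a z - γ) hX ?_ fun s hs => ?_
  · filter_upwards [hpq] with z hz
    rw [eval_sub, ← hz]
    simp only [eval_mul, eval_C, eval_pow, eval_X]
    ring
  · rw [iteratedDeriv_fun_sub han.contDiffAt contDiffAt_const, hrep s hs, iteratedDeriv_const,
      sub_self]

end Polynomial

theorem injective_ite_neg_of_re_pos {ι : Type*} {u : ι → ℂ} (hu : Function.Injective u)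
    (hre : ∀ i, 0 < (u i).re) :
    Function.Injective fun p : ι × Bool => if p.2 then -u p.1 else u p.1 := by
  rintro ⟨i, _ | _⟩ ⟨j, _ | _⟩ h <;> simp only [Bool.false_eq_true, ↓reduceIte, neg_inj] at h
  · rw [hu h]
  · linarith [hre i, hre j, congrArg re h, neg_re (u j)]
  · linarith [hre i, hre j, congrArg re h, neg_re (u i)]
  · rw [hu h]

theorem Complex.abs_im_lt_pi_of_pos_or_mul_I {θ : ℂ}
    (hθ : (∃ t : ℝ, 0 < t ∧ θ = (t : ℂ)) ∨ (∃ β : ℝ, 0 < β ∧ β < Real.pi ∧ θ = (β : ℂ) * I)) :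
    |θ.im| < Real.pi := by
  rcases hθ with ⟨t, -, rfl⟩ | ⟨β, hβ, hβπ, rfl⟩
  · simpa using Real.pi_pos
  · simpa [abs_of_pos hβ] using hβπ

theorem Complex.re_exp_div_two_pow_pos {θ : ℂ} (hθ : |θ.im| < Real.pi) (k : ℕ) :
    0 < (exp (θ / 2 ^ (k + 1))).re := by
  have h2 : (2 : ℝ) ≤ 2 ^ (k + 1) := le_self_pow₀ one_le_two (by omega)
  have him : |(θ / 2 ^ (k + 1)).im| < Real.pi / 2 := by
    rw [show (2 : ℂ) ^ (k + 1) = ((2 ^ (k + 1) : ℝ) : ℂ) by push_cast; rfl, div_ofReal_im,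
      abs_div, abs_of_pos (a := (2 : ℝ) ^ (k + 1)) (by positivity)]
    calc |θ.im| / 2 ^ (k + 1) ≤ |θ.im| / 2 := by gcongr
      _ < Real.pi / 2 := by linarith
  rw [exp_re]
  exact mul_pos (Real.exp_pos _) (Real.cos_pos_of_mem_Ioo (abs_lt.1 him))

theorem prod_bspline_factor_eq {ι : Type*} [Fintype ι] (w : ι → ℂ) (hw : ∀ ℓ, w ℓ ≠ 0)
    (τ : ι → ℕ) (z : ℂ) :
    ∏ ℓ, (((w ℓ)⁻¹ * z + 1) * (w ℓ * z + 1)) ^ τ ℓ =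
      ∏ p : ι × Bool, (z - -(if p.2 then w p.1 else (w p.1)⁻¹)) ^ τ p.1 := by
  rw [Fintype.prod_prod_type]
  refine prod_congr rfl fun ℓ _ => ?_
  rw [Fintype.prod_bool, if_pos rfl, if_neg Bool.false_ne_true, ← mul_pow]
  congr 1
  have := hw ℓ
  field_simp
  ring

theorem pow_mul_bspline_symbol_eq_eval {ι : Type*} [Fintype ι] {w : ι → ℂ} (hw : ∀ ℓ, w ℓ ≠ 0)
    (τ : ι → ℕ) (K : ℂ) (M : ℕ) {R : ℂ[X]} {z γ : ℂ} (hz : z ≠ 0)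
    (hγ : z ^ (M - 1) * γ = R.eval z) :
    z ^ (2 * M - 1) * (K * z ^ (-(M : ℤ)) * (∏ ℓ, (((w ℓ)⁻¹ * z + 1) * (w ℓ * z + 1)) ^ τ ℓ) * γ) =
      (C K * (∏ p : ι × Bool, (X - C (-(if p.2 then w p.1 else (w p.1)⁻¹))) ^ τ p.1) * R).eval z := by
  have hzM : z ^ (2 * M - 1) * z ^ (-(M : ℤ)) = z ^ (M - 1) := by
    rw [zpow_neg, zpow_natCast, ← div_eq_mul_inv, div_eq_iff (pow_ne_zero _ hz), ← pow_add]
    congr 1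
    omega
  rw [prod_bspline_factor_eq w hw]
  simp only [eval_mul, eval_C, eval_prod, eval_pow, eval_sub, eval_X, ← hγ, ← hzM]
  ring

def IsInterpolatorySymbol (a : ℂ → ℂ) : Prop := ∀ z : ℂ, z ≠ 0 → a z + a (-z) = 2

theorem isInterpolatorySymbol_of_hermite_conditions {ι : Type*} [Fintype ι] {u : ι → ℂ}
    (hu : Function.Injective u) (hre : ∀ i, 0 < (u i).re) {n : ι → ℕ} {P : ℂ[X]} {D : ℕ}
    (hD : Odd D) (hdegP : P.natDegree < 2 * ∑ i, n i) (hdegD : D < 2 * ∑ i, n i)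
    (hP : ∀ i, (X - C (-u i)) ^ n i ∣ P) {a : ℂ → ℂ} (ha : ∀ z, z ≠ 0 → z ^ D * a z = P.eval z)
    (hrep : ∀ i, ∀ s < n i, iteratedDeriv s a (u i) = if s = 0 then 2 else 0) :
    IsInterpolatorySymbol a := by
  have hu0 : ∀ i, u i ≠ 0 := fun i h => (hre i).ne' (by simp [h])
  set F : ℂ[X] := P - P.comp (-X) - C 2 * X ^ D with hF
  have hF_eval : ∀ z, z ≠ 0 → F.eval z = z ^ D * (a z + a (-z) - 2) := by
    intro z hz
    have h1 := ha z hz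
    have h2 := ha (-z) (neg_ne_zero.2 hz)
    rw [hD.neg_pow] at h2
    simp only [hF, eval_sub, eval_mul, eval_C, eval_pow, eval_X, eval_comp, eval_neg]
    linear_combination h2 - h1
  have hF_odd : F.comp (-X) = -F := by
    simp only [hF, sub_comp, mul_comp, C_comp, pow_comp, X_comp, comp_assoc, neg_comp, neg_neg,
      comp_X, hD.neg_pow]
    ring
  have hdvd : ∀ i, (X - C (u i)) ^ n i ∣ F := by
    intro i
    have hcomp := X_sub_C_pow_dvd_comp_neg (hP i)
    rw [neg_neg] at hcomp
    rw [hF, sub_right_comm]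
    exact dvd_sub (X_sub_C_pow_dvd_sub_C_mul_X_pow (hu0 i) ha (hrep i)) hcomp
  have hdegF : F.natDegree < 2 * ∑ i, n i := by
    have hcomp : (P.comp (-X)).natDegree ≤ P.natDegree := natDegree_comp_le.trans (by simp)
    have hmon : (C (2 : ℂ) * X ^ D).natDegree ≤ D := natDegree_C_mul_X_pow_le _ _
    have h1 := natDegree_sub_le (P - P.comp (-X)) (C 2 * X ^ D)
    have h2 := natDegree_sub_le P (P.comp (-X))
    rw [hF]
    omega
  have hF0 : F = 0 := by
    refine eq_zero_of_X_sub_C_pow_dvd (injective_ite_neg_of_re_pos hu hre)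
      (n := fun p => n p.1) ?_ ?_
    · rintro ⟨i, _ | _⟩
      · exact hdvd i
      · simpa [hF_odd] using X_sub_C_pow_dvd_comp_neg (hdvd i)
    · simpa [Fintype.sum_prod_type, Fintype.sum_bool, two_mul, sum_add_distrib] using hdegF
  intro z hz
  have := hF_eval z hz
  rw [hF0, eval_zero, eq_comm, mul_eq_zero, sub_eq_zero, or_iff_right (pow_ne_zero _ hz)] at this
  exact this

theorem exponential_pseudoSpline_interpolatory_general (k m : ℕ) (hm : 1 ≤ m)
    (θ : Fin m → ℂ)
    (hθ : ∀ ℓ, (∃ t : ℝ, 0 < t ∧ θ ℓ = (t : ℂ)) ∨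
               (∃ β : ℝ, 0 < β ∧ β < Real.pi ∧ θ ℓ = (β : ℂ) * I))
    (τ : Fin m → ℕ) (hτ : ∀ ℓ, 1 ≤ τ ℓ)
    (N : ℕ) (hN : N = 2 * ∑ ℓ, τ ℓ)
    (w : Fin m → ℂ) (hw : ∀ ℓ, w ℓ = exp (-θ ℓ / 2 ^ (k + 1)))
    (hdist : Function.Injective (fun p : Fin m × Bool => if p.2 then w p.1 else (w p.1)⁻¹))
    (K : ℂ)
    (B : ℂ → ℂ)
    (hB : ∀ z : ℂ, B z = K * z ^ (-((N / 2 : ℕ) : ℤ)) *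
      ∏ ℓ, ((exp (θ ℓ / 2 ^ (k + 1)) * z + 1) * (exp (-θ ℓ / 2 ^ (k + 1)) * z + 1)) ^ τ ℓ)
    (c : ℂ → ℂ) (co : ℤ → ℂ)
    (hc : ∀ z : ℂ, z ≠ 0 →
      c z = ∑ j ∈ Finset.Icc (1 - ((N / 2 : ℕ) : ℤ)) (((N / 2 : ℕ) : ℤ) - 1), co j * z ^ j)
    (a : ℂ → ℂ) (ha : ∀ z : ℂ, a z = B z * c z)
    (hrep : ∀ ℓ, ∀ s < τ ℓ,
      iteratedDeriv s a (w ℓ) = (if s = 0 then 2 else 0) ∧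
      iteratedDeriv s a ((w ℓ)⁻¹) = (if s = 0 then 2 else 0)) :
    ∀ z : ℂ, z ≠ 0 → a z + a (-z) = 2 := by
  set M := ∑ ℓ, τ ℓ
  have hM : 1 ≤ M := (hτ ⟨0, hm⟩).trans (single_le_sum (fun _ _ => Nat.zero_le _) (mem_univ _))
  have hNM : N / 2 = M := by omega
  have hw0 : ∀ ℓ, w ℓ ≠ 0 := fun ℓ => hw ℓ ▸ exp_ne_zero _
  have hexp : ∀ ℓ, exp (θ ℓ / 2 ^ (k + 1)) = (w ℓ)⁻¹ := fun ℓ => by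
    rw [hw, ← exp_neg, neg_div, neg_neg]
  obtain ⟨R, hRdeg, hR⟩ := exists_eval_eq_pow_mul_laurent co (M - 1)
  have hcR : ∀ z, z ≠ 0 → z ^ (M - 1) * c z = R.eval z := fun z hz => by
    rw [hc z hz, hNM, ← hR z hz]
    congr 3 <;> omega
  have hsum : ∑ p : Fin m × Bool, τ p.1 = 2 * M := by
    simp [M, Fintype.sum_prod_type, two_mul, sum_add_distrib]
  refine isInterpolatorySymbol_of_hermite_conditions hdist ?_ (n := fun p => τ p.1)
    (P := C K * (∏ p : Fin m × Bool, (X - C (-(if p.2 then w p.1 else (w p.1)⁻¹))) ^ τ p.1) * R)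
    (D := 2 * M - 1) ⟨M - 1, by omega⟩ ?_ (by omega)
    (fun p => ((dvd_prod_of_mem _ (mem_univ p)).mul_left _).mul_right _) (fun z hz => ?_) ?_
  · have hθ_im ℓ := abs_im_lt_pi_of_pos_or_mul_I (hθ ℓ)
    rintro ⟨ℓ, _ | _⟩
    · simpa [hexp] using re_exp_div_two_pow_pos (hθ_im ℓ) k
    · simpa [hw] using re_exp_div_two_pow_pos (θ := -θ ℓ) (by simpa using hθ_im ℓ) k
  · calc _ ≤ (C K * ∏ p : Fin m × Bool, _).natDegree + R.natDegree := natDegree_mul_le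
      _ ≤ 2 * M + 2 * (M - 1) :=
        add_le_add ((natDegree_C_mul_le _ _).trans (by rw [natDegree_prod_X_sub_C_pow, hsum]))
          hRdeg
      _ < _ := by omega
  · rw [ha, hB, hNM, ← pow_mul_bspline_symbol_eq_eval hw0 τ K M hz (hcR z hz)]
    simp only [hexp, ← hw]
  · rintro ⟨ℓ, _ | _⟩ s hs
    exacts [(hrep ℓ s hs).2, (hrep ℓ s hs).1]

/-- Even-order symmetric exponential pseudo-splines with full reproduction (`M = N`,
shift parameter `p = 0`) are interpolatory: `a(z) + a(-z) = 2`. -/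
theorem exponential_pseudoSpline_interpolatory (k m : ℕ) (hm : 1 ≤ m)
    (θ : Fin m → ℂ)
    (hθ : ∀ ℓ, (∃ t : ℝ, 0 < t ∧ θ ℓ = (t : ℂ)) ∨
               (∃ β : ℝ, 0 < β ∧ β < Real.pi ∧ θ ℓ = (β : ℂ) * I))
    (hθinj : Function.Injective θ)
    (τ : Fin m → ℕ) (hτ : ∀ ℓ, 1 ≤ τ ℓ)
    (N : ℕ) (hN : N = 2 * ∑ ℓ, τ ℓ)
    (w : Fin m → ℂ) (hw : ∀ ℓ, w ℓ = exp (-θ ℓ / 2 ^ (k + 1)))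
    (hdist : Function.Injective (fun p : Fin m × Bool => if p.2 then w p.1 else (w p.1)⁻¹))
    (K : ℂ) (hK : K ≠ 0)
    (B : ℂ → ℂ)
    (hB : ∀ z : ℂ, B z = K * z ^ (-((N / 2 : ℕ) : ℤ)) *
      ∏ ℓ, ((exp (θ ℓ / 2 ^ (k + 1)) * z + 1) * (exp (-θ ℓ / 2 ^ (k + 1)) * z + 1)) ^ τ ℓ)
    (c : ℂ → ℂ) (co : ℤ → ℂ)
    (hc : ∀ z : ℂ, z ≠ 0 →
      c z = ∑ j ∈ Finset.Icc (1 - ((N / 2 : ℕ) : ℤ)) (((N / 2 : ℕ) : ℤ) - 1), co j * z ^ j)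
    (hcsym : ∀ z : ℂ, z ≠ 0 → c z = c z⁻¹)
    (a : ℂ → ℂ) (ha : ∀ z : ℂ, a z = B z * c z)
    (hrep : ∀ ℓ, ∀ s < τ ℓ,
      iteratedDeriv s a (w ℓ) = (if s = 0 then 2 else 0) ∧
      iteratedDeriv s a ((w ℓ)⁻¹) = (if s = 0 then 2 else 0)) :
    ∀ z : ℂ, z ≠ 0 → a z + a (-z) = 2 :=
  exponential_pseudoSpline_interpolatory_general k m hm θ hθ τ hτ N hN w hw hdist K B hB c co hc a
    ha hrep
end

section
/- Let ρ ≥ 1 be an integer, N = 2ρ, and let M be an even integer with 2 ≤ M ≤ N. Define, for z ∈ ℂ∖{0}, B_N(z) := 2^{−(N−1)}·z^{−ρ}·(z+1)^N, δ(z) := −(1−z)²/(4z), and c_M(z) := Σ_{s=0}^{⌊(M−1)/2⌋} binom(ρ+s−1, s)·δ(z)^s. Then the product a(z) := B_N(z)·c_M(z) satisfies a(1) = 2 and, for every s = 1, …, M−1, the s-th complex derivative of a at 1 equals 0. Consequently a(z) = 2·σ(z)^ρ·Σ_{s=0}^{⌊(M−1)/2⌋} binom(ρ+s−1, s)·δ(z)^s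 with σ(z) := (1+z)²/(4z), which is the symbol of the binary (primal) pseudo-spline with parameters (M, N). -/
/-!
Since `σ(z) + δ(z) = 1`, the symbol is `2 (1 - δ)^ρ c(δ)` where `c` is the truncation after
degree `K = ⌊(M-1)/2⌋` of the binomial series `(1 - X)^(-ρ) = Σ binom(ρ+s-1, s) X^s`. Hence
`(1 - X)^ρ c(X) = 1 + X^(K+1) q(X)` for a polynomial `q`, and since `δ(z) = (z - 1)^2 / (-4z)`
has a double zero at `1`, `a(z) - 2` vanishes to order `2(K+1) ≥ M` at `z = 1`.
-/

open Finset Topology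

namespace PowerSeries

variable {R : Type*} [CommRing R]

theorem coeff_invOneSubPow_val (ρ n : ℕ) :
    coeff n (invOneSubPow R ρ).val = ((ρ + n - 1).choose n : R) := by
  cases ρ with
  | zero => cases n <;> simp [invOneSubPow_zero, coeff_one]
  | succ d => rw [invOneSubPow_val_succ_eq_mk_add_choose, coeff_mk, Nat.choose_symm_add]; simp

theorem X_pow_dvd_one_sub_pow_mul_trunc_invOneSubPow_sub_one (ρ n : ℕ) :
    (Polynomial.X ^ n : Polynomial R) ∣
      (1 - Polynomial.X) ^ ρ * trunc n (invOneSubPow R ρ).val - 1 := by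
  have htrunc :
      trunc n (((1 - Polynomial.X) ^ ρ * trunc n (invOneSubPow R ρ).val : Polynomial R) : R⟦X⟧)
        = trunc n 1 := by
    push_cast
    rw [trunc_mul_trunc, ← invOneSubPow_inv_eq_one_sub_pow, (invOneSubPow R ρ).inv_val]
  rw [Polynomial.X_pow_dvd_iff]
  intro d hd
  have := congrArg (Polynomial.coeff · d) htrunc
  simp only [coeff_trunc, if_pos hd, Polynomial.coeff_coe, coeff_one] at this
  simp [this, Polynomial.coeff_one]

end PowerSeries

open PowerSeries in
theorem exists_one_sub_pow_mul_sum_choose_eq {R : Type*} [CommRing R] (ρ n : ℕ) :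
    ∃ q : Polynomial R, ∀ w : R,
      (1 - w) ^ ρ * ∑ s ∈ range n, ((ρ + s - 1).choose s : R) * w ^ s = 1 + w ^ n * q.eval w := by
  obtain ⟨q, hq⟩ := X_pow_dvd_one_sub_pow_mul_trunc_invOneSubPow_sub_one (R := R) ρ n
  refine ⟨q, fun w => ?_⟩
  have hsum : ∑ s ∈ range n, ((ρ + s - 1).choose s : R) * w ^ s
      = (trunc n (invOneSubPow R ρ).val).eval w := by
    simp [Polynomial.eval, eval₂_trunc_eq_sum_range, coeff_invOneSubPow_val]
  have := congrArg (Polynomial.eval w) hq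
  simp only [Polynomial.eval_sub, Polynomial.eval_mul, Polynomial.eval_pow, Polynomial.eval_X,
    Polynomial.eval_one] at this
  rw [hsum]
  linear_combination this

theorem iteratedDeriv_sub_pow_mul_eq_zero {𝕜 : Type*} [NontriviallyNormedField 𝕜] {f : 𝕜 → 𝕜}
    {x : 𝕜} {n s : ℕ} (hf : ContDiffAt 𝕜 s f x) (hs : s < n) :
    iteratedDeriv s (fun z => (z - x) ^ n * f z) x = 0 := by
  rw [iteratedDeriv_fun_mul (by fun_prop) hf]
  refine sum_eq_zero fun i hi => ?_
  have hin : i < n := (Nat.lt_succ_iff.mp (mem_range.mp hi)).trans_lt hs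
  rw [iteratedDeriv_comp_sub_const i (· ^ n) x]
  simp [Nat.sub_ne_zero_of_lt hin]

theorem inv_two_pow_mul_zpow_neg_mul_add_one_pow {ρ : ℕ} (hρ : 1 ≤ ρ) {z : ℂ} (hz : z ≠ 0) :
    ((2 : ℂ) ^ (2 * ρ - 1))⁻¹ * z ^ (-(ρ : ℤ)) * (z + 1) ^ (2 * ρ)
      = 2 * ((1 + z) ^ 2 / (4 * z)) ^ ρ := by
  have h4 : (4 : ℂ) ^ ρ = 2 ^ (2 * ρ - 1) * 2 := by
    rw [← pow_succ, Nat.sub_add_cancel (by omega), pow_mul]; norm_num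
  rw [zpow_neg, zpow_natCast, div_pow, mul_pow, h4, ← pow_mul, add_comm 1 z]
  field_simp

theorem one_add_sq_div_eq_one_sub {z : ℂ} (hz : z ≠ 0) :
    (1 + z) ^ 2 / (4 * z) = 1 - -((1 - z) ^ 2 / (4 * z)) := by
  field_simp
  ring

theorem neg_one_sub_sq_div (z : ℂ) : -((1 - z) ^ 2 / (4 * z)) = (z - 1) ^ 2 * (-(4 * z))⁻¹ := by
  rw [inv_neg, div_eq_mul_inv]
  ring

theorem primal_pseudoSpline_symbol_general (ρ : ℕ) (hρ : 1 ≤ ρ) (N : ℕ) (hN : N = 2 * ρ)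
    (M : ℕ)
    (a : ℂ → ℂ)
    (ha : ∀ z : ℂ, a z =
      ((2 : ℂ) ^ (N - 1))⁻¹ * z ^ (-(ρ : ℤ)) * (z + 1) ^ N *
        ∑ s ∈ range ((M - 1) / 2 + 1),
          (((ρ + s - 1).choose s : ℕ) : ℂ) * (-((1 - z) ^ 2 / (4 * z))) ^ s) :
    a 1 = 2 ∧
    (∀ s : ℕ, 1 ≤ s → s ≤ M - 1 → iteratedDeriv s a 1 = 0) ∧
    (∀ z : ℂ, z ≠ 0 → a z =
      2 * ((1 + z) ^ 2 / (4 * z)) ^ ρ *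
        ∑ s ∈ range ((M - 1) / 2 + 1),
          (((ρ + s - 1).choose s : ℕ) : ℂ) * (-((1 - z) ^ 2 / (4 * z))) ^ s) := by
  subst hN
  have hsymbol : ∀ z : ℂ, z ≠ 0 → a z =
      2 * ((1 + z) ^ 2 / (4 * z)) ^ ρ *
        ∑ s ∈ range ((M - 1) / 2 + 1),
          (((ρ + s - 1).choose s : ℕ) : ℂ) * (-((1 - z) ^ 2 / (4 * z))) ^ s := fun z hz => by
    rw [ha z, inv_two_pow_mul_zpow_neg_mul_add_one_pow hρ hz]
  refine ⟨?_, fun s hs1 hsM => ?_, hsymbol⟩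
  · rw [hsymbol 1 one_ne_zero]
    norm_num [sum_range_succ']
  set K := (M - 1) / 2
  obtain ⟨q, hq⟩ := exists_one_sub_pow_mul_sum_choose_eq (R := ℂ) ρ (K + 1)
  set h : ℂ → ℂ := fun z => 2 * (-(4 * z))⁻¹ ^ (K + 1) * q.eval ((z - 1) ^ 2 * (-(4 * z))⁻¹)
  have hlocal : a =ᶠ[𝓝 1] fun z => 2 + (z - 1) ^ (2 * (K + 1)) * h z := by
    filter_upwards [isOpen_compl_singleton.mem_nhds one_ne_zero] with z hz
    rw [hsymbol z hz, one_add_sq_div_eq_one_sub hz, mul_assoc, hq, neg_one_sub_sq_div]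
    simp only [h, mul_pow, ← pow_mul]
    ring
  have hh : ContDiffAt ℂ s h 1 := by
    have hinv : ContDiffAt ℂ s (fun z : ℂ => (-(4 * z))⁻¹) 1 := by fun_prop (disch := norm_num)
    exact (by fun_prop : ContDiffAt ℂ s (fun z : ℂ => 2 * (-(4 * z))⁻¹ ^ (K + 1)) 1).mul
      (q.differentiable.contDiff.contDiffAt.comp 1 (by fun_prop))
  rw [hlocal.iteratedDeriv_eq, iteratedDeriv_const_add (by omega),
    iteratedDeriv_sub_pow_mul_eq_zero hh (by omega)]

/-- The product of the (shifted) order-`N` B-spline symbol with the correction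
`c_M(z) = Σ_s binom(ρ+s-1,s) δ(z)^s` satisfies the polynomial reproduction conditions at
`1` with shift `p = 0` up to order `M-1`, and equals the primal pseudo-spline symbol
`2 σ(z)^ρ Σ_s binom(ρ+s-1,s) δ(z)^s`. -/
theorem primal_pseudoSpline_symbol (ρ : ℕ) (hρ : 1 ≤ ρ) (N : ℕ) (hN : N = 2 * ρ)
    (M : ℕ) (hM2 : 2 ≤ M) (hMN : M ≤ N) (hMeven : Even M)
    (a : ℂ → ℂ)
    (ha : ∀ z : ℂ, a z =
      ((2 : ℂ) ^ (N - 1))⁻¹ * z ^ (-(ρ : ℤ)) * (z + 1) ^ N *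
        ∑ s ∈ range ((M - 1) / 2 + 1),
          (((ρ + s - 1).choose s : ℕ) : ℂ) * (-((1 - z) ^ 2 / (4 * z))) ^ s) :
    a 1 = 2 ∧
    (∀ s : ℕ, 1 ≤ s → s ≤ M - 1 → iteratedDeriv s a 1 = 0) ∧
    (∀ z : ℂ, z ≠ 0 → a z =
      2 * ((1 + z) ^ 2 / (4 * z)) ^ ρ *
        ∑ s ∈ range ((M - 1) / 2 + 1),
          (((ρ + s - 1).choose s : ℕ) : ℂ) * (-((1 - z) ^ 2 / (4 * z))) ^ s) :=
  primal_pseudoSpline_symbol_general ρ hρ N hN M a ha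
end

section
/- Let ρ ≥ 1 be an integer, N = 2ρ+1, and let M be an odd integer with 1 ≤ M ≤ N. Define, for z ∈ ℂ∖{0}, B_N(z) := 2^{−(N−1)}·z^{−(ρ+1)}·(z+1)^N, δ(z) := −(1−z)²/(4z), and c_M(z) := Σ_{s=0}^{⌊(M−1)/2⌋} b_s·δ(z)^s, where b_s := (1/s!)·∏_{i=0}^{s−1}(ρ − 1/2 + s − i) is the generalized binomial coefficient binom(ρ − 1/2 + s, s). Then the product a(z) := B_N(z)·c_M(z) satisfies, for every s = 0, …, M−1, that the s-th complex derivative of a at 1 equals 2·∏_{i=0}^{s−1}(−1/2 − i). Consequently a(z) = ((z+1)/z)·σ(z)^ρ·Σ_{s=0}^{⌊(M−1)/2⌋} b_s·δ(z)^s with σ(z) := (1+z)²/(4z), which is the symbol of the binary (dual) pseudo-spline with parameters (M, N). -/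
/-!
Put `u = (1 - z)² / (4z)`, so that `δ = -u` and `1 + u = σ(z)`. The correction `c_M` is the
degree-`n` truncation `T(u)` (where `M = 2n + 1`) of the binomial series of
`(1 + u)^{-(2ρ+1)/2}`, hence `(1 + u)^{2ρ+1} T(u)² = 1 + O(u^{n+1})`. Since
`z a(z)² = 4 σ(z)^{2ρ+1} T(u)²` and `u^{n+1}` vanishes to order `2n + 2` at `z = 1`, this gives
`z a(z)² = 4 + O((z - 1)^{2n+2})`. So `a` agrees to order `2n + 2` at `1` with the branch
`2 z^{-1/2}` of `√(4 / z)`, whose derivatives at `1` are the stated products.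
-/

open Finset PowerSeries Filter Topology

theorem Ring.choose_eq_inv_factorial_mul_prod {K : Type*} [Field K] [CharZero K] (r : K) (s : ℕ) :
    Ring.choose r s = (s.factorial : K)⁻¹ * ∏ i ∈ range s, (r - i) := by
  rw [Ring.choose_eq_smul, smul_eq_mul, ← descPochhammer_eval_eq_prod_range,
    ← descPochhammer_map (Int.castRingHom K), Polynomial.eval_map,
    ← Polynomial.aeval_eq_smeval]
  rfl

theorem Ring.choose_neg_mul_pow {R : Type*} [CommRing R] [BinomialRing R] (α u : R) (s : ℕ) :
    Ring.choose (-α) s * u ^ s = Ring.choose (α + s - 1) s * (-u) ^ s := by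
  rw [Ring.choose_neg, Units.smul_def, Int.coe_negOnePow_natCast, zsmul_eq_mul, neg_pow]
  push_cast
  ring

theorem PowerSeries.X_pow_dvd_coe_iff {R : Type*} [CommRing R] {p : Polynomial R} {n : ℕ} :
    (X : R⟦X⟧) ^ n ∣ (p : R⟦X⟧) ↔ Polynomial.X ^ n ∣ p := by
  simp [Polynomial.X_pow_dvd_iff, PowerSeries.X_pow_dvd_iff, Polynomial.coeff_coe]

theorem PowerSeries.X_pow_dvd_sub_trunc {R : Type*} [CommRing R] (n : ℕ) (f : R⟦X⟧) :
    X ^ n ∣ f - (trunc n f : R⟦X⟧) :=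
  ⟨_, sub_eq_of_eq_add (eq_X_pow_mul_shift_add_trunc n f)⟩

theorem PowerSeries.one_add_X_pow_mul_binomialSeries_sq {K : Type*} [Field K] [CharZero K]
    (d : ℕ) : (1 + X : K⟦X⟧) ^ d * binomialSeries K (-(d : K) / 2) ^ 2 = 1 := by
  rw [sq, ← binomialSeries_add, ← binomialSeries_nat (R := K), ← binomialSeries_add]
  ring_nf
  exact binomialSeries_zero

theorem X_pow_dvd_one_add_X_pow_mul_trunc_binomialSeries_sq_sub_one
    {K : Type*} [Field K] [CharZero K] (d n : ℕ) :
    (Polynomial.X : Polynomial K) ^ n ∣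
      (1 + Polynomial.X) ^ d * (trunc n (binomialSeries K (-(d : K) / 2))) ^ 2 - 1 := by
  set B := binomialSeries K (-(d : K) / 2)
  have hcoe : (((1 + Polynomial.X) ^ d * (trunc n B) ^ 2 - 1 : Polynomial K) : K⟦X⟧)
      = -((1 + X) ^ d * ((trunc n B : K⟦X⟧) + B)) * (B - (trunc n B : K⟦X⟧)) := by
    push_cast
    linear_combination one_add_X_pow_mul_binomialSeries_sq (K := K) d
  rw [← PowerSeries.X_pow_dvd_coe_iff, hcoe]
  exact (X_pow_dvd_sub_trunc n B).mul_left _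

theorem iteratedDeriv_eq_of_sub_eventuallyEq_pow_smul {𝕜 E : Type*} [NontriviallyNormedField 𝕜]
    [CharZero 𝕜] [NormedAddCommGroup E] [NormedSpace 𝕜 E] [CompleteSpace E]
    {f g G : 𝕜 → E} {x : 𝕜} {k : ℕ} (hf : AnalyticAt 𝕜 f x) (hg : AnalyticAt 𝕜 g x)
    (hG : AnalyticAt 𝕜 G x) (h : ∀ᶠ z in 𝓝 x, f z - g z = (z - x) ^ k • G z) :
    ∀ i < k, iteratedDeriv i f x = iteratedDeriv i g x := by
  have hfg := hf.sub hg
  have hvanish := (natCast_le_analyticOrderAt_iff_iteratedDeriv_eq_zero hfg).1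
    ((natCast_le_analyticOrderAt hfg).2 ⟨G, hG, h⟩)
  intro i hi
  rw [← sub_eq_zero, ← iteratedDeriv_sub hf.contDiffAt hg.contDiffAt]
  exact hvanish i hi

theorem Complex.iteratedDeriv_cpow_const (c : ℂ) (k : ℕ) {x : ℂ} (hx : x ∈ slitPlane) :
    iteratedDeriv k (fun z : ℂ => z ^ c) x = (∏ i ∈ range k, (c - i)) * x ^ (c - k) := by
  induction k generalizing x with
  | zero => simp
  | succ k ih =>
    rw [iteratedDeriv_succ, (eventuallyEq_of_mem (isOpen_slitPlane.mem_nhds hx)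
      fun y hy => ih hy).deriv_eq, deriv_const_mul_field']
    simp only [deriv_cpow_const hx, prod_range_succ]
    push_cast
    ring_nf

theorem iteratedDeriv_one_eq_of_mul_sq_eventuallyEq_four_add {a g : ℂ → ℂ} {k : ℕ}
    (ha : AnalyticAt ℂ a 1) (ha1 : a 1 = 2) (hg : AnalyticAt ℂ g 1)
    (h : ∀ᶠ z in 𝓝 1, z * a z ^ 2 = 4 + (z - 1) ^ k * g z) :
    ∀ i < k, iteratedDeriv i a 1 = 2 * ∏ j ∈ range i, (-(1 / 2) - (j : ℂ)) := by
  set b : ℂ → ℂ := fun z => 2 * z ^ (-(1 / 2) : ℂ)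
  have hb : AnalyticAt ℂ b 1 := by fun_prop (disch := simp)
  have hb1 : b 1 = 2 := by simp [b]
  have hbsq : ∀ z ≠ 0, z * b z ^ 2 = 4 := fun z hz => by
    rw [mul_pow, ← Complex.cpow_nat_mul]
    norm_num [Complex.cpow_neg_one]
    field_simp
  have hden : ∀ᶠ z in 𝓝 1, z ≠ 0 ∧ z * (a z + b z) ≠ 0 := by
    refine (eventually_ne_nhds one_ne_zero).and (ContinuousAt.eventually_ne (by fun_prop) ?_)
    norm_num [ha1, hb1]
  have hG : AnalyticAt ℂ (fun z => g z / (z * (a z + b z))) 1 :=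
    hg.div (by fun_prop) (by norm_num [ha1, hb1])
  intro i hi
  -- `z (a - b)(a + b) = z a² - z b² = (z - 1)^k g`, and `a + b ≠ 0` near `1`.
  rw [iteratedDeriv_eq_of_sub_eventuallyEq_pow_smul ha hb hG ?_ i hi,
    iteratedDeriv_const_mul_field, Complex.iteratedDeriv_cpow_const _ _ Complex.one_mem_slitPlane,
    Complex.one_cpow, mul_one]
  filter_upwards [h, hden] with z hz ⟨hz0, hzab⟩
  rw [smul_eq_mul, mul_div_assoc', eq_div_iff hzab]
  linear_combination hz - hbsq z hz0

namespace DualPseudoSpline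

theorem sum_eq_eval_trunc (ρ m : ℕ) (u : ℂ) :
    ∑ s ∈ range m, ((s.factorial : ℕ) : ℂ)⁻¹ *
        (∏ i ∈ range s, ((ρ : ℂ) - 1 / 2 + (s : ℂ) - (i : ℂ))) * (-u) ^ s
      = (trunc m (binomialSeries ℂ (-((2 * ρ + 1 : ℕ) : ℂ) / 2))).eval u := by
  rw [Polynomial.eval, eval₂_trunc_eq_sum_range]
  refine sum_congr rfl fun s _ => ?_
  rw [binomialSeries_coeff, smul_eq_mul, mul_one, RingHom.id_apply, neg_div,
    Ring.choose_neg_mul_pow, Ring.choose_eq_inv_factorial_mul_prod]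
  congr 2
  refine prod_congr rfl fun i _ => ?_
  push_cast
  ring

theorem bsplineSymbol_eq (ρ : ℕ) {z : ℂ} (hz : z ≠ 0) :
    ((2 : ℂ) ^ (2 * ρ + 1 - 1))⁻¹ * z ^ (-((ρ : ℤ) + 1)) * (z + 1) ^ (2 * ρ + 1)
      = (z + 1) / z * ((1 + z) ^ 2 / (4 * z)) ^ ρ := by
  rw [show -((ρ : ℤ) + 1) = -((ρ + 1 : ℕ) : ℤ) by push_cast; ring, zpow_neg, zpow_natCast,
    Nat.add_sub_cancel, div_pow, mul_pow, ← pow_mul,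
    show (4 : ℂ) ^ ρ = 2 ^ (2 * ρ) by rw [pow_mul]; norm_num]
  field_simp
  ring

theorem mul_sq_eq (ρ : ℕ) (c : ℂ) {z : ℂ} (hz : z ≠ 0) :
    z * ((z + 1) / z * ((1 + z) ^ 2 / (4 * z)) ^ ρ * c) ^ 2
      = 4 * (1 + (1 - z) ^ 2 / (4 * z)) ^ (2 * ρ + 1) * c ^ 2 := by
  have hσ : 1 + (1 - z) ^ 2 / (4 * z) = (1 + z) ^ 2 / (4 * z) := by field_simp; ring
  have h : z * ((z + 1) / z) ^ 2 = 4 * ((1 + z) ^ 2 / (4 * z)) := by field_simp; ring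
  rw [hσ]
  linear_combination (((1 + z) ^ 2 / (4 * z)) ^ ρ * c) ^ 2 * h

theorem exists_mul_sq_eq_four_add (ρ n : ℕ) : ∃ R : Polynomial ℂ, ∀ z ≠ 0,
    z * ((z + 1) / z * ((1 + z) ^ 2 / (4 * z)) ^ ρ *
        (trunc (n + 1) (binomialSeries ℂ (-((2 * ρ + 1 : ℕ) : ℂ) / 2))).eval
          ((1 - z) ^ 2 / (4 * z))) ^ 2
      = 4 + (z - 1) ^ (2 * n + 2) * (4 * R.eval ((1 - z) ^ 2 / (4 * z)) / (4 * z) ^ (n + 1)) := by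
  obtain ⟨R, hR⟩ :=
    X_pow_dvd_one_add_X_pow_mul_trunc_binomialSeries_sq_sub_one (K := ℂ) (2 * ρ + 1) (n + 1)
  refine ⟨R, fun z hz => ?_⟩
  set u := (1 - z) ^ 2 / (4 * z) with hu_def
  have hRu := congrArg (Polynomial.eval u) hR
  simp only [Polynomial.eval_sub, Polynomial.eval_mul, Polynomial.eval_pow, Polynomial.eval_add,
    Polynomial.eval_one, Polynomial.eval_X] at hRu
  have hu : u ^ (n + 1) = (z - 1) ^ (2 * n + 2) / (4 * z) ^ (n + 1) := by
    rw [hu_def, div_pow, ← pow_mul, ← neg_sub, Even.neg_pow ⟨n + 1, by ring⟩, mul_add_one]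
  rw [mul_sq_eq ρ _ hz]
  linear_combination 4 * hRu + 4 * R.eval u * hu

end DualPseudoSpline

theorem dual_pseudoSpline_symbol_general (ρ : ℕ) (N : ℕ) (hN : N = 2 * ρ + 1)
    (M : ℕ) (hModd : Odd M)
    (a : ℂ → ℂ)
    (ha : ∀ z : ℂ, a z =
      ((2 : ℂ) ^ (N - 1))⁻¹ * z ^ (-((ρ : ℤ) + 1)) * (z + 1) ^ N *
        ∑ s ∈ range ((M - 1) / 2 + 1),
          (((s.factorial : ℕ) : ℂ))⁻¹ *
            (∏ i ∈ range s, ((ρ : ℂ) - 1 / 2 + (s : ℂ) - (i : ℂ))) *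
            (-((1 - z) ^ 2 / (4 * z))) ^ s) :
    (∀ s : ℕ, s ≤ M - 1 → iteratedDeriv s a 1 =
        2 * ∏ i ∈ range s, (-(1 / 2 : ℂ) - (i : ℂ))) ∧
    (∀ z : ℂ, z ≠ 0 → a z =
      ((z + 1) / z) * ((1 + z) ^ 2 / (4 * z)) ^ ρ *
        ∑ s ∈ range ((M - 1) / 2 + 1),
          (((s.factorial : ℕ) : ℂ))⁻¹ *
            (∏ i ∈ range s, ((ρ : ℂ) - 1 / 2 + (s : ℂ) - (i : ℂ))) *
            (-((1 - z) ^ 2 / (4 * z))) ^ s) := by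
  subst hN
  obtain ⟨n, rfl⟩ := hModd
  have hsymbol : ∀ z ≠ 0, a z = _ := fun z hz => by rw [ha z, DualPseudoSpline.bsplineSymbol_eq ρ hz]
  refine ⟨fun s hs => ?_, hsymbol⟩
  simp only [Nat.add_sub_cancel, Nat.mul_div_cancel_left n two_pos,
    DualPseudoSpline.sum_eq_eval_trunc] at hsymbol
  obtain ⟨R, hR⟩ := DualPseudoSpline.exists_mul_sq_eq_four_add ρ n
  set T := trunc (n + 1) (binomialSeries ℂ (-((2 * ρ + 1 : ℕ) : ℂ) / 2))
  set u : ℂ → ℂ := fun z => (1 - z) ^ 2 / (4 * z)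
  have hpoly (p : Polynomial ℂ) : AnalyticAt ℂ (fun z => p.eval (u z)) 1 := by
    simpa only [Polynomial.coe_aeval_eq_eval] using
      (by fun_prop (disch := norm_num) : AnalyticAt ℂ u 1).aeval_polynomial p
  have ha_eq : a =ᶠ[𝓝 1] fun z => (z + 1) / z * ((1 + z) ^ 2 / (4 * z)) ^ ρ * T.eval (u z) :=
    (eventually_ne_nhds one_ne_zero).mono hsymbol
  refine iteratedDeriv_one_eq_of_mul_sq_eventuallyEq_four_add (k := 2 * n + 2)
    (g := fun z => 4 * R.eval (u z) / (4 * z) ^ (n + 1)) ?_ ?_ ?_ ?_ s (by omega)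
  · refine AnalyticAt.congr ?_ ha_eq.symm
    exact (by fun_prop (disch := norm_num) :
      AnalyticAt ℂ (fun z : ℂ => (z + 1) / z * ((1 + z) ^ 2 / (4 * z)) ^ ρ) 1).mul (hpoly T)
  · rw [ha_eq.eq_of_nhds]
    norm_num [u, T, ← Polynomial.coeff_zero_eq_eval_zero, coeff_trunc]
  · exact (analyticAt_const.mul (hpoly R)).div (by fun_prop) (by norm_num)
  · filter_upwards [eventually_ne_nhds one_ne_zero] with z hz
    rw [hsymbol z hz]
    exact hR z hz

/-- The product of the (shifted) odd-order-`N` B-spline symbol with the correction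
`c_M(z) = Σ_s binom(ρ-1/2+s,s) δ(z)^s` satisfies the polynomial reproduction conditions at
`1` with shift `p = -1/2` up to order `M-1`, and equals the dual pseudo-spline symbol
`((z+1)/z) σ(z)^ρ Σ_s binom(ρ-1/2+s,s) δ(z)^s`. -/
theorem dual_pseudoSpline_symbol (ρ : ℕ) (hρ : 1 ≤ ρ) (N : ℕ) (hN : N = 2 * ρ + 1)
    (M : ℕ) (hM1 : 1 ≤ M) (hMN : M ≤ N) (hModd : Odd M)
    (a : ℂ → ℂ)
    (ha : ∀ z : ℂ, a z =
      ((2 : ℂ) ^ (N - 1))⁻¹ * z ^ (-((ρ : ℤ) + 1)) * (z + 1) ^ N *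
        ∑ s ∈ range ((M - 1) / 2 + 1),
          (((s.factorial : ℕ) : ℂ))⁻¹ *
            (∏ i ∈ range s, ((ρ : ℂ) - 1 / 2 + (s : ℂ) - (i : ℂ))) *
            (-((1 - z) ^ 2 / (4 * z))) ^ s) :
    (∀ s : ℕ, s ≤ M - 1 → iteratedDeriv s a 1 =
        2 * ∏ i ∈ range s, (-(1 / 2 : ℂ) - (i : ℂ))) ∧
    (∀ z : ℂ, z ≠ 0 → a z =
      ((z + 1) / z) * ((1 + z) ^ 2 / (4 * z)) ^ ρ *
        ∑ s ∈ range ((M - 1) / 2 + 1),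
          (((s.factorial : ℕ) : ℂ))⁻¹ *
            (∏ i ∈ range s, ((ρ : ℂ) - 1 / 2 + (s : ℂ) - (i : ℂ))) *
            (-((1 - z) ^ 2 / (4 * z))) ^ s) :=
  dual_pseudoSpline_symbol_general ρ N hN M hModd a ha
end

section
/- Fix an integer m ≥ 1, θ_1, …, θ_m each either a positive real number or θ_ℓ = iβ_ℓ with β_ℓ ∈ [0,π), and integers τ_1, …, τ_m ≥ 1; set N := 2(τ_1 + ⋯ + τ_m). For each integer k ≥ 0 define B̃^{(k)}(z) := z^{−N/2}·∏_{ℓ=1}^{m}[(e^{θ_ℓ/2^{k+1}}z + 1)(e^{−θ_ℓ/2^{k+1}}z + 1)]^{τ_ℓ}, define B̃_{N−2}^{(k)}(z) := z^{−(N−2)/2}·(e^{θ_1/2^{k+1}}z + 1)^{τ_1−1}(e^{−θ_1/2^{k+1}}z + 1)^{τ_1−1}·∏_{ℓ=2}^{m}[(e^{θ_ℓ/2^{k+1}}z + 1)(e^{−θ_ℓ/2^{k+1}}z + 1)]^{τ_ℓ} (i.e. B̃^{(k)} with one copy of the pair (θ_1, −θ_1) removed), set D_k := (e^{−θ_1/2^{k+1}}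 + e^{θ_1/2^{k+1}})·B̃_{N−2}^{(k)}(e^{θ_1/2^{k+1}}), and assume D_k ≠ 0 for every k. Then for every z ∈ ℂ∖{0} the normalized exponential B-spline symbols B^{(k)}(z) := D_k^{−1}·B̃^{(k)}(z) converge, as k → ∞, to the (shifted) order-N polynomial B-spline symbol B_N(z) = 2^{−(N−1)}·z^{−N/2}·(z+1)^N. -/
/-!
Every factor of the symbols is a continuous function of the numbers `exp (± θ ℓ / 2 ^ (k + 1))`,
all of which tend to `1` as `k → ∞`. Hence `B̃^{(k)}(z) → z^{-N/2} (z + 1)^N`, while `D_k`, the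
same kind of expression evaluated at a point tending to `1`, tends to
`2 · 2^{2(τ₁ - 1)} · 2^{2(τ₂ + ⋯ + τₘ)} = 2^{N-1} ≠ 0`.
-/

open Complex Finset Filter Topology

theorem tendsto_exp_div_two_pow_succ (c : ℂ) :
    Tendsto (fun k : ℕ => exp (c / 2 ^ (k + 1))) atTop (𝓝 1) := by
  have hpow : Tendsto (fun k : ℕ => ((2 : ℂ)⁻¹) ^ (k + 1)) atTop (𝓝 0) :=
    (tendsto_pow_atTop_nhds_zero_of_norm_lt_one (by norm_num)).comp (tendsto_add_atTop_nat 1)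
  have hdiv : Tendsto (fun k : ℕ => c / 2 ^ (k + 1)) atTop (𝓝 0) := by
    simpa [div_eq_mul_inv, inv_pow] using hpow.const_mul c
  simpa [Function.comp_def] using (continuous_exp.tendsto 0).comp hdiv

theorem tendsto_exp_pair_factor (c : ℂ) {u : ℕ → ℂ} {z : ℂ} (hu : Tendsto u atTop (𝓝 z)) :
    Tendsto (fun k => (exp (c / 2 ^ (k + 1)) * u k + 1) * (exp (-c / 2 ^ (k + 1)) * u k + 1))
      atTop (𝓝 ((z + 1) ^ 2)) := by
  simpa [sq] using (((tendsto_exp_div_two_pow_succ c).mul hu).add_const 1).mul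
    (((tendsto_exp_div_two_pow_succ (-c)).mul hu).add_const 1)

theorem tendsto_prod_exp_pair_factor_pow {ι : Type*} (s : Finset ι) (θ : ι → ℂ) (τ : ι → ℕ)
    {u : ℕ → ℂ} {z : ℂ} (hu : Tendsto u atTop (𝓝 z)) :
    Tendsto (fun k => ∏ ℓ ∈ s,
        ((exp (θ ℓ / 2 ^ (k + 1)) * u k + 1) * (exp (-θ ℓ / 2 ^ (k + 1)) * u k + 1)) ^ τ ℓ)
      atTop (𝓝 ((z + 1) ^ (2 * ∑ ℓ ∈ s, τ ℓ))) := by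
  rw [pow_mul, ← prod_pow_eq_pow_sum]
  exact tendsto_finsetProd s fun ℓ _ => (tendsto_exp_pair_factor (θ ℓ) hu).pow (τ ℓ)

theorem two_mul_sum_sub_one_eq {ι : Type*} [Fintype ι] [DecidableEq ι] (τ : ι → ℕ) {i : ι}
    (hi : 1 ≤ τ i) :
    2 * ∑ ℓ, τ ℓ - 1 = 1 + 2 * (τ i - 1) + 2 * ∑ ℓ ∈ univ.erase i, τ ℓ := by
  rw [← add_sum_erase univ τ (mem_univ i)]
  omega

theorem normalized_expBSpline_tendsto_polynomial_BSpline_general (m : ℕ)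
    (θ : Fin (m + 1) → ℂ)
    (τ : Fin (m + 1) → ℕ) (hτ : ∀ ℓ, 1 ≤ τ ℓ)
    (N : ℕ) (hN : N = 2 * ∑ ℓ, τ ℓ)
    (Bt : ℕ → ℂ → ℂ)
    (hBt : ∀ (k : ℕ) (z : ℂ), Bt k z = z ^ (-((N / 2 : ℕ) : ℤ)) *
      ∏ ℓ, ((exp (θ ℓ / 2 ^ (k + 1)) * z + 1) * (exp (-θ ℓ / 2 ^ (k + 1)) * z + 1)) ^ τ ℓ)
    (Bt2 : ℕ → ℂ → ℂ)
    (hBt2 : ∀ (k : ℕ) (z : ℂ), Bt2 k z = z ^ (-(((N - 2) / 2 : ℕ) : ℤ)) *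
      ((exp (θ 0 / 2 ^ (k + 1)) * z + 1) * (exp (-θ 0 / 2 ^ (k + 1)) * z + 1)) ^ (τ 0 - 1) *
      ∏ ℓ ∈ Finset.univ.erase 0,
        ((exp (θ ℓ / 2 ^ (k + 1)) * z + 1) * (exp (-θ ℓ / 2 ^ (k + 1)) * z + 1)) ^ τ ℓ)
    (D : ℕ → ℂ)
    (hD : ∀ k, D k = (exp (-θ 0 / 2 ^ (k + 1)) + exp (θ 0 / 2 ^ (k + 1))) *
      Bt2 k (exp (θ 0 / 2 ^ (k + 1)))) :
    ∀ z : ℂ, z ≠ 0 →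
      Tendsto (fun k => (D k)⁻¹ * Bt k z) atTop
        (nhds (((2 : ℂ) ^ (N - 1))⁻¹ * z ^ (-((N / 2 : ℕ) : ℤ)) * (z + 1) ^ N)) := by
  intro z _
  have hθ₀ := tendsto_exp_div_two_pow_succ (θ 0)
  have hBt_lim : Tendsto (fun k => Bt k z) atTop
      (𝓝 (z ^ (-((N / 2 : ℕ) : ℤ)) * (z + 1) ^ N)) := by
    simp only [hBt, hN]
    exact (tendsto_prod_exp_pair_factor_pow univ θ τ tendsto_const_nhds).const_mul _
  have hD_lim : Tendsto D atTop (𝓝 (2 ^ (N - 1))) := by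
    have hlim := ((tendsto_exp_div_two_pow_succ (-θ 0)).add hθ₀).mul
      (((hθ₀.zpow₀ (-(((N - 2) / 2 : ℕ) : ℤ)) (Or.inl one_ne_zero)).mul
          ((tendsto_exp_pair_factor (θ 0) hθ₀).pow (τ 0 - 1))).mul
        (tendsto_prod_exp_pair_factor_pow (univ.erase 0) θ τ hθ₀))
    convert hlim using 1
    · exact funext fun k => by rw [hD, hBt2]
    · rw [hN, two_mul_sum_sub_one_eq τ (hτ 0)]
      norm_num [pow_add, pow_mul, mul_assoc]
  rw [mul_assoc]
  exact (hD_lim.inv₀ (pow_ne_zero _ two_ne_zero)).mul hBt_lim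

/-- The normalized exponential B-spline symbols `B^{(k)} = D_k⁻¹ · B̃^{(k)}` of even order
`N` converge pointwise, as the level `k → ∞`, to the (shifted) order-`N` polynomial
B-spline symbol `B_N(z) = 2^{-(N-1)} z^{-N/2} (z+1)^N`. -/
theorem normalized_expBSpline_tendsto_polynomial_BSpline (m : ℕ)
    (θ : Fin (m + 1) → ℂ)
    (hθ : ∀ ℓ, (∃ t : ℝ, 0 < t ∧ θ ℓ = (t : ℂ)) ∨
               (∃ β : ℝ, 0 ≤ β ∧ β < Real.pi ∧ θ ℓ = (β : ℂ) * I))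
    (τ : Fin (m + 1) → ℕ) (hτ : ∀ ℓ, 1 ≤ τ ℓ)
    (N : ℕ) (hN : N = 2 * ∑ ℓ, τ ℓ)
    (Bt : ℕ → ℂ → ℂ)
    (hBt : ∀ (k : ℕ) (z : ℂ), Bt k z = z ^ (-((N / 2 : ℕ) : ℤ)) *
      ∏ ℓ, ((exp (θ ℓ / 2 ^ (k + 1)) * z + 1) * (exp (-θ ℓ / 2 ^ (k + 1)) * z + 1)) ^ τ ℓ)
    (Bt2 : ℕ → ℂ → ℂ)
    (hBt2 : ∀ (k : ℕ) (z : ℂ), Bt2 k z = z ^ (-(((N - 2) / 2 : ℕ) : ℤ)) *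
      ((exp (θ 0 / 2 ^ (k + 1)) * z + 1) * (exp (-θ 0 / 2 ^ (k + 1)) * z + 1)) ^ (τ 0 - 1) *
      ∏ ℓ ∈ Finset.univ.erase 0,
        ((exp (θ ℓ / 2 ^ (k + 1)) * z + 1) * (exp (-θ ℓ / 2 ^ (k + 1)) * z + 1)) ^ τ ℓ)
    (D : ℕ → ℂ)
    (hD : ∀ k, D k = (exp (-θ 0 / 2 ^ (k + 1)) + exp (θ 0 / 2 ^ (k + 1))) *
      Bt2 k (exp (θ 0 / 2 ^ (k + 1))))
    (hDne : ∀ k, D k ≠ 0) :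
    ∀ z : ℂ, z ≠ 0 →
      Tendsto (fun k => (D k)⁻¹ * Bt k z) atTop
        (nhds (((2 : ℂ) ^ (N - 1))⁻¹ * z ^ (-((N / 2 : ℕ) : ℤ)) * (z + 1) ^ N)) :=
  normalized_expBSpline_tendsto_polynomial_BSpline_general m θ τ hτ N hN Bt hBt Bt2 hBt2 D hD
end

section
/- Let ρ ≥ 1 and k ≥ 0 be integers, and let θ ∈ ℂ be either a positive real number or θ = iβ with β ∈ [0,π). Set v := (e^{θ/2^{k+1}} + e^{−θ/2^{k+1}})/2 (which is nonzero) and w := e^{−θ/2^{k+1}}, and define for z ≠ 0: B(z) := (z + z⁻¹ + 2v)^ρ / (2^{2ρ−1}·v^ρ), c(z) := Σ_{j=0}^{ρ−1} (−1)^j·binom(ρ+j−1, j)·(4v)^{−j}·(z + z⁻¹ − 2v)^j, and a(z) := B(z)·c(z). Then a(w) = a(w⁻¹) = 2 and, for every s = 1, …, ρ−1, the s-th complex derivatives of a at w and at w⁻¹ are both 0. -/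
/-!
With `t = (z + z⁻¹ - 2v) / (4v)` the symbol factors as `B = 2 (1 + t)^ρ`, while `c` is the
truncation below degree `ρ` of the binomial series of `(1 + t)^(-ρ)`. Hence
`a = 2 + 2 t^ρ Q(t)` for a polynomial `Q`. Since `w + w⁻¹ = 2v`, `t = (z - w)(z - w⁻¹) / (4vz)`
has a simple zero at `w` and at `w⁻¹`, so `a - 2` vanishes to order `ρ` at both points.
The condition on `θ` makes `v = cosh (θ / 2^(k+1))` nonzero.
-/

open Complex Finset Filter Topology
open scoped Polynomial

namespace PowerSeries
variable (R : Type*) [CommRing R]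

theorem one_add_X_pow_mul_rescale_invOneSubPow (ρ : ℕ) :
    (1 + X) ^ ρ * rescale (-1 : R) (invOneSubPow R ρ) = 1 := by
  have h := congrArg (rescale (-1 : R)) (invOneSubPow R ρ).inv_val
  rwa [invOneSubPow_inv_eq_one_sub_pow, map_mul, map_pow, map_sub, map_one,
    rescale_neg_one_X, sub_neg_eq_add] at h

theorem coeff_rescale_neg_one_invOneSubPow {ρ : ℕ} (hρ : 0 < ρ) (j : ℕ) :
    coeff j (rescale (-1 : R) (invOneSubPow R ρ)) = (-1) ^ j * ((ρ + j - 1).choose j : R) := by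
  rw [invOneSubPow_val_eq_mk_sub_one_add_choose_of_pos _ _ hρ, coeff_rescale, coeff_mk,
    Nat.choose_symm_add, show ρ - 1 + j = ρ + j - 1 by omega]

end PowerSeries

theorem Polynomial.X_pow_dvd_mul_trunc_sub_one {R : Type*} [CommRing R] {p : R[X]}
    {F : PowerSeries R} (hpF : (p : PowerSeries R) * F = 1) (n : ℕ) :
    X ^ n ∣ p * PowerSeries.trunc n F - 1 := by
  refine X_pow_dvd_iff.mpr fun d hd => ?_
  have hcoeff (φ : PowerSeries R) : PowerSeries.coeff d φ = (PowerSeries.trunc n φ).coeff d := by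
    rw [PowerSeries.coeff_trunc, if_pos hd]
  rw [coeff_sub, ← coeff_coe, ← coeff_coe, coe_mul, hcoeff, PowerSeries.trunc_mul_trunc, hpF,
    ← hcoeff, coe_one, sub_self]

theorem exists_one_add_pow_mul_sum_neg_choose_eq (R : Type*) [CommRing R] {ρ : ℕ} (hρ : 0 < ρ) :
    ∃ Q : R[X], ∀ t : R, (1 + t) ^ ρ * ∑ j ∈ range ρ, (-1) ^ j * ((ρ + j - 1).choose j : R) * t ^ j
      = 1 + t ^ ρ * Q.eval t := by
  set F := PowerSeries.rescale (-1 : R) (PowerSeries.invOneSubPow R ρ)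
  have hinv : (((1 + Polynomial.X) ^ ρ : R[X]) : PowerSeries R) * F = 1 := by
    rw [Polynomial.coe_pow, Polynomial.coe_add, Polynomial.coe_one, Polynomial.coe_X,
      PowerSeries.one_add_X_pow_mul_rescale_invOneSubPow]
  obtain ⟨Q, hQ⟩ := Polynomial.X_pow_dvd_mul_trunc_sub_one hinv ρ
  refine ⟨Q, fun t => ?_⟩
  have htrunc : (PowerSeries.trunc ρ F).eval t
      = ∑ j ∈ range ρ, (-1) ^ j * ((ρ + j - 1).choose j : R) * t ^ j := by
    rw [Polynomial.eval, PowerSeries.eval₂_trunc_eq_sum_range]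
    simp only [F, PowerSeries.coeff_rescale_neg_one_invOneSubPow R hρ, RingHom.id_apply]
  have h := congrArg (Polynomial.eval t) hQ
  simp only [Polynomial.eval_sub, Polynomial.eval_mul, Polynomial.eval_pow, Polynomial.eval_add,
    Polynomial.eval_one, Polynomial.eval_X, htrunc] at h
  linear_combination h

theorem iteratedDeriv_eq_zero_of_eventuallyEq_const_add_pow_mul {𝕜 : Type*}
    [NontriviallyNormedField 𝕜] [CharZero 𝕜] [CompleteSpace 𝕜] {f r : 𝕜 → 𝕜} {w c : 𝕜}
    {n s : ℕ} (hr : AnalyticAt 𝕜 r w) (hf : f =ᶠ[𝓝 w] fun z => c + (z - w) ^ n * r z)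
    (hs : 0 < s) (hsn : s < n) : iteratedDeriv s f w = 0 := by
  have hg : AnalyticAt 𝕜 (fun z => (z - w) ^ n * r z) w := by fun_prop
  have horder : (n : ℕ∞) ≤ analyticOrderAt (fun z => (z - w) ^ n * r z) w :=
    (natCast_le_analyticOrderAt hg).mpr ⟨r, hr, .of_forall fun z => rfl⟩
  rw [hf.iteratedDeriv_eq, iteratedDeriv_const_add hs]
  exact (natCast_le_analyticOrderAt_iff_iteratedDeriv_eq_zero hg).mp horder s hsn

theorem Complex.cosh_ofReal_ne_zero (t : ℝ) : cosh (t : ℂ) ≠ 0 := by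
  exact_mod_cast (Real.cosh_pos t).ne'

theorem Complex.cosh_ofReal_mul_I_ne_zero {β : ℝ} (h₁ : -(Real.pi / 2) < β)
    (h₂ : β < Real.pi / 2) : cosh (β * I) ≠ 0 := by
  rw [cosh_mul_I]
  exact_mod_cast (Real.cos_pos_of_mem_Ioo ⟨h₁, h₂⟩).ne'

theorem cosh_div_two_pow_succ_ne_zero {θ : ℂ}
    (hθ : (∃ t : ℝ, 0 < t ∧ θ = (t : ℂ)) ∨ (∃ β : ℝ, 0 ≤ β ∧ β < Real.pi ∧ θ = (β : ℂ) * I))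
    (k : ℕ) : cosh (θ / 2 ^ (k + 1)) ≠ 0 := by
  rcases hθ with ⟨t, -, rfl⟩ | ⟨β, hβ₀, hβπ, rfl⟩
  · exact_mod_cast Complex.cosh_ofReal_ne_zero (t / 2 ^ (k + 1))
  · have h2 : (2 : ℝ) ≤ 2 ^ (k + 1) := le_self_pow₀ one_le_two (by omega)
    have hlt : β / 2 ^ (k + 1) < Real.pi / 2 :=
      (div_le_div_of_nonneg_left hβ₀ two_pos h2).trans_lt (by linarith)
    have hpos : 0 ≤ β / 2 ^ (k + 1) := by positivity
    rw [show (β : ℂ) * I / 2 ^ (k + 1) = ((β / 2 ^ (k + 1) : ℝ) : ℂ) * I by push_cast; ring]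
    exact Complex.cosh_ofReal_mul_I_ne_zero (by linarith [Real.pi_pos]) hlt

noncomputable def pseudoSplineSymbol (ρ : ℕ) (v z : ℂ) : ℂ :=
  (z + z⁻¹ + 2 * v) ^ ρ / (2 ^ (2 * ρ - 1) * v ^ ρ) *
    ∑ j ∈ range ρ, (-1 : ℂ) ^ j * (((ρ + j - 1).choose j : ℕ) : ℂ) * (4 * v) ^ (-(j : ℤ)) *
      (z + z⁻¹ - 2 * v) ^ j

section
variable {ρ : ℕ} {v : ℂ}

theorem pseudoSplineSymbol_eq_two_mul (hρ : 0 < ρ) (hv : v ≠ 0) (z : ℂ) :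
    pseudoSplineSymbol ρ v z = 2 * ((1 + (z + z⁻¹ - 2 * v) / (4 * v)) ^ ρ *
      ∑ j ∈ range ρ, (-1) ^ j * ((ρ + j - 1).choose j : ℂ) * ((z + z⁻¹ - 2 * v) / (4 * v)) ^ j) := by
  have hB : (z + z⁻¹ + 2 * v) ^ ρ / (2 ^ (2 * ρ - 1) * v ^ ρ)
      = 2 * (1 + (z + z⁻¹ - 2 * v) / (4 * v)) ^ ρ := by
    obtain ⟨m, rfl⟩ : ∃ m, ρ = m + 1 := ⟨ρ - 1, by omega⟩
    have h1 : 1 + (z + z⁻¹ - 2 * v) / (4 * v) = (z + z⁻¹ + 2 * v) / (2 ^ 2 * v) := by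
      field_simp
      ring
    rw [h1, div_pow, mul_pow, ← pow_mul, show 2 * (m + 1) - 1 = 2 * m + 1 by omega]
    field_simp
    ring
  rw [pseudoSplineSymbol, hB, mul_assoc]
  congr 2
  refine sum_congr rfl fun j _ => ?_
  rw [zpow_neg, zpow_natCast, div_pow]
  ring

theorem exists_pseudoSplineSymbol_eq_two_add_pow_mul (hρ : 0 < ρ) (hv : v ≠ 0) {w : ℂ}
    (hw : w ≠ 0) (hvw : w + w⁻¹ = 2 * v) :
    ∃ r : ℂ → ℂ, AnalyticAt ℂ r w ∧
      ∀ z ≠ 0, pseudoSplineSymbol ρ v z = 2 + (z - w) ^ ρ * r z := by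
  obtain ⟨Q, hQ⟩ := exists_one_add_pow_mul_sum_neg_choose_eq ℂ hρ
  refine ⟨fun z => 2 * ((z - w⁻¹) / (4 * v * z)) ^ ρ * Q.eval ((z + z⁻¹ - 2 * v) / (4 * v)),
    ?_, fun z hz => ?_⟩
  · have ht : AnalyticAt ℂ (fun z => (z + z⁻¹ - 2 * v) / (4 * v)) w := by
      fun_prop (disch := assumption)
    have hQt := ht.aeval_polynomial Q
    simp only [Polynomial.coe_aeval_eq_eval] at hQt
    fun_prop (disch := simp [hv, hw])
  · have ht : (z + z⁻¹ - 2 * v) / (4 * v) = (z - w) * ((z - w⁻¹) / (4 * v * z)) := by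
      rw [← hvw]
      field_simp
      ring
    rw [pseudoSplineSymbol_eq_two_mul hρ hv, hQ, ht, mul_pow, ← ht]
    ring

theorem pseudoSplineSymbol_reproduction_at {w : ℂ} {a : ℂ → ℂ} (hρ : 0 < ρ)
    (hv : v ≠ 0) (hw : w ≠ 0) (hvw : w + w⁻¹ = 2 * v)
    (ha : ∀ z ≠ 0, a z = pseudoSplineSymbol ρ v z) :
    a w = 2 ∧ ∀ s, 0 < s → s < ρ → iteratedDeriv s a w = 0 := by
  obtain ⟨r, hr, hsymbol⟩ := exists_pseudoSplineSymbol_eq_two_add_pow_mul hρ hv hw hvw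
  have hloc : a =ᶠ[𝓝 w] fun z => 2 + (z - w) ^ ρ * r z := by
    filter_upwards [eventually_ne_nhds hw] with z hz
    rw [ha z hz, hsymbol z hz]
  refine ⟨by simp [hloc.eq_of_nhds, hρ.ne'], fun s hs hsρ => ?_⟩
  exact iteratedDeriv_eq_zero_of_eventuallyEq_const_add_pow_mul hr hloc hs hsρ

end

/-- The exponential pseudo-spline symbol `a = B·c` of order `N = 2ρ` associated with
`Γ = {(θ,ρ), (-θ,ρ)}` satisfies the conditions, with shift parameter `p = 0`, for
reproduction of `span{x^j e^{θx}, x^j e^{-θx} : 0 ≤ j ≤ ρ-1}`: it takes the value `2`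
at `w = e^{-θ/2^{k+1}}` and at `w⁻¹`, and its derivatives of orders `1, …, ρ-1` vanish
at both points. (Moreover `v ≠ 0`.) -/
theorem exponential_pseudoSpline_reproduction_conditions (ρ k : ℕ) (hρ : 1 ≤ ρ)
    (θ : ℂ)
    (hθ : (∃ t : ℝ, 0 < t ∧ θ = (t : ℂ)) ∨
          (∃ β : ℝ, 0 ≤ β ∧ β < Real.pi ∧ θ = (β : ℂ) * I))
    (v : ℂ) (hv : v = (exp (θ / 2 ^ (k + 1)) + exp (-θ / 2 ^ (k + 1))) / 2)
    (B c a : ℂ → ℂ)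
    (hB : ∀ z : ℂ, z ≠ 0 → B z = (z + z⁻¹ + 2 * v) ^ ρ / (2 ^ (2 * ρ - 1) * v ^ ρ))
    (hc : ∀ z : ℂ, z ≠ 0 → c z = ∑ j ∈ range ρ,
      (-1 : ℂ) ^ j * (((ρ + j - 1).choose j : ℕ) : ℂ) * (4 * v) ^ (-(j : ℤ)) *
        (z + z⁻¹ - 2 * v) ^ j)
    (ha : ∀ z : ℂ, z ≠ 0 → a z = B z * c z) :
    v ≠ 0 ∧
    a (exp (-θ / 2 ^ (k + 1))) = 2 ∧
    a ((exp (-θ / 2 ^ (k + 1)))⁻¹) = 2 ∧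
    (∀ s : ℕ, 1 ≤ s → s ≤ ρ - 1 →
      iteratedDeriv s a (exp (-θ / 2 ^ (k + 1))) = 0 ∧
      iteratedDeriv s a ((exp (-θ / 2 ^ (k + 1)))⁻¹) = 0) := by
  have hv_cosh : v = cosh (θ / 2 ^ (k + 1)) := by rw [hv, cosh, neg_div]
  have hv0 : v ≠ 0 := hv_cosh ▸ cosh_div_two_pow_succ_ne_zero hθ k
  have hw : exp (-θ / 2 ^ (k + 1)) ≠ 0 := exp_ne_zero _
  have hvw : exp (-θ / 2 ^ (k + 1)) + (exp (-θ / 2 ^ (k + 1)))⁻¹ = 2 * v := by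
    rw [hv, ← exp_neg, neg_div, neg_neg]
    ring
  have ha' : ∀ z ≠ 0, a z = pseudoSplineSymbol ρ v z := fun z hz => by
    rw [ha z hz, hB z hz, hc z hz, pseudoSplineSymbol]
  obtain ⟨haw, hdw⟩ := pseudoSplineSymbol_reproduction_at hρ hv0 hw hvw ha'
  obtain ⟨haw', hdw'⟩ := pseudoSplineSymbol_reproduction_at hρ hv0 (inv_ne_zero hw)
    (by rw [inv_inv, add_comm, hvw]) ha'
  exact ⟨hv0, haw, haw', fun s hs hsρ => ⟨hdw s hs (by omega), hdw' s hs (by omega)⟩⟩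
end
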